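/- arXiv:2108.09086 — 7 statements merged into one kernel-verified Lean document; each statement's English description precedes it below -/
import Mathlib

section
/- If n+1 is even, then the ∞-norm of the inverse of T_{n+1} equals ((n+1)² + 2(n+1))/8, i.e. ‖T_{n+1}^{−1}‖_∞ = ((n+1)² + 2(n+1))/8. -/
open Matrix Real Filter

/-- tridiagonal Toeplitz matrix with diagonal `d` and off-diagonal `o` -/
def trid (N : ℕ) (d o : ℝ) : Matrix (Fin N) (Fin N) ℝ :=
  Matrix.of fun r c => if r = c then d else if r.1 + 1 = c.1 ∨ c.1 + 1 = r.1 then o else 0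

/-- the matrix `T_{n+1}`: the Toeplitz matrix generated by `2 - 2cos θ`
(diagonal entries 2, off-diagonal entries -1) -/
def T (N : ℕ) : Matrix (Fin N) (Fin N) ℝ := trid N 2 (-1)

/-- the grid spacing `h = 1/(n+1)` -/
noncomputable def h (n : ℕ) : ℝ := 1 / (n + 1)

/-- `S_{n+1} = h⁻² T_{n+1}` -/
noncomputable def S (n : ℕ) : Matrix (Fin (n+1)) (Fin (n+1)) ℝ := ((h n)^2)⁻¹ • T (n+1)

/-- matrix norm induced by the vector ∞-norm: maximum absolute row sum -/
noncomputable def normInf {N : ℕ} (M : Matrix (Fin (N+1)) (Fin (N+1)) ℝ) : ℝ :=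
  Finset.univ.sup' Finset.univ_nonempty (fun r => ∑ c, |M r c|)

/-- matrix norm induced by the vector 1-norm: maximum absolute column sum -/
noncomputable def norm1 {N : ℕ} (M : Matrix (Fin (N+1)) (Fin (N+1)) ℝ) : ℝ :=
  Finset.univ.sup' Finset.univ_nonempty (fun c => ∑ r, |M r c|)

/-- 1-indexed entries of the inverse of `T (n+1)` -/
noncomputable def mf (n a b : ℕ) : ℝ :=
  ((min a b : ℕ) : ℝ) * ((n:ℝ) + 2 - ((max a b : ℕ) : ℝ)) / ((n:ℝ) + 2)

noncomputable def Minv (n : ℕ) : Matrix (Fin (n+1)) (Fin (n+1)) ℝ :=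
  Matrix.of fun r c => mf n (r.1+1) (c.1+1)

lemma mf_zero (n b : ℕ) : mf n 0 b = 0 := by
  simp [mf]

lemma mf_top (n b : ℕ) (hb : b ≤ n+2) : mf n (n+2) b = 0 := by
  unfold mf
  rw [max_eq_left hb]
  push_cast
  ring

lemma key (n a b : ℕ) (ha : 1 ≤ a) (ha' : a ≤ n+1) (hb : 1 ≤ b) (hb' : b ≤ n+1) :
    2*mf n a b - mf n (a-1) b - mf n (a+1) b = if a = b then 1 else 0 := by
  have hden : (n:ℝ)+2 ≠ 0 := by positivity
  unfold mf
  rcases lt_trichotomy a b with hab | hab | hab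
  · rw [if_neg hab.ne]
    rw [min_eq_left hab.le, max_eq_right hab.le,
        min_eq_left (by omega : a + 1 ≤ b), max_eq_right (by omega : a + 1 ≤ b),
        min_eq_left (by omega : a - 1 ≤ b), max_eq_right (by omega : a - 1 ≤ b)]
    push_cast [Nat.cast_sub ha]
    field_simp
    ring
  · subst hab
    rw [if_pos rfl]
    rw [min_self, max_self, min_eq_left (by omega : a - 1 ≤ a), max_eq_right (by omega : a - 1 ≤ a),
        min_eq_right (by omega : a ≤ a + 1), max_eq_left (by omega : a ≤ a + 1)]
    push_cast [Nat.cast_sub ha]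
    field_simp
    ring
  · rw [if_neg hab.ne']
    rw [min_eq_right hab.le, max_eq_left hab.le,
        min_eq_right (by omega : b ≤ a + 1), max_eq_left (by omega : b ≤ a + 1),
        min_eq_right (by omega : b ≤ a - 1), max_eq_left (by omega : b ≤ a - 1)]
    push_cast [Nat.cast_sub ha]
    field_simp
    ring

lemma Tmul (n : ℕ) : T (n+1) * Minv n = 1 := by
  ext r c
  rw [Matrix.mul_apply]
  set F : ℕ → ℝ := fun i =>
    (if i = r.1 then 2 * mf n (i+1) (c.1+1) else 0)
    + (if i + 1 = r.1 then -(mf n (i+1) (c.1+1)) else 0)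
    + (if i = r.1 + 1 then -(mf n (i+1) (c.1+1)) else 0) with hF
  have hterm : ∀ k : Fin (n+1), T (n+1) r k * Minv n k c = F k.1 := by
    intro k
    simp only [T, trid, Minv, Matrix.of_apply, hF, Fin.ext_iff]
    split_ifs <;> ((try (exfalso; omega)); try ring)
  calc ∑ k, T (n+1) r k * Minv n k c
      = ∑ k : Fin (n+1), F k.1 := Finset.sum_congr rfl (fun k _ => hterm k)
    _ = ∑ i ∈ Finset.range (n+1), F i := Fin.sum_univ_eq_sum_range F (n+1)
    _ = (1 : Matrix (Fin (n+1)) (Fin (n+1)) ℝ) r c := by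
        rw [hF]
        rw [Finset.sum_add_distrib, Finset.sum_add_distrib]
        rw [Finset.sum_ite_eq' (Finset.range (n+1)) r.1 (fun i => 2 * mf n (i+1) (c.1+1))]
        rw [Finset.sum_ite_eq' (Finset.range (n+1)) (r.1+1) (fun i => -(mf n (i+1) (c.1+1)))]
        have h2 : (∑ i ∈ Finset.range (n+1), if i + 1 = r.1 then -(mf n (i+1) (c.1+1)) else 0)
            = -(mf n r.1 (c.1+1)) := by
          rcases Nat.eq_zero_or_pos r.1 with h0 | h0
          · rw [h0, mf_zero]
            simp
          · obtain ⟨s, hs⟩ : ∃ s, r.1 = s + 1 := ⟨r.1 - 1, by omega⟩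
            rw [hs]
            simp only [add_left_inj]
            rw [Finset.sum_ite_eq' (Finset.range (n+1)) s (fun i => -(mf n (i+1) (c.1+1)))]
            rw [if_pos (Finset.mem_range.mpr (by have := r.2; omega))]
        rw [h2]
        rw [if_pos (Finset.mem_range.mpr r.2)]
        have h3 : (if r.1 + 1 ∈ Finset.range (n+1) then -(mf n (r.1+1+1) (c.1+1)) else 0)
            = -(mf n (r.1+2) (c.1+1)) := by
          split_ifs with h
          · rfl
          · have hr : r.1 = n := by have := r.2; simp [Finset.mem_range] at h; omega
            rw [hr, show n + 2 = n + 1 + 1 from rfl]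
            rw [mf_top n (c.1+1) (by have := c.2; omega)]
            simp
        rw [h3, Matrix.one_apply]
        have := key n (r.1+1) (c.1+1) (by omega) (by have := r.2; omega)
          (by omega) (by have := c.2; omega)
        simp only [Nat.add_sub_cancel] at this
        rw [show r.1 + 1 + 1 = r.1 + 2 from rfl] at this
        rw [show (2 * mf n (r.1+1) (c.1+1) + -(mf n r.1 (c.1+1)) + -(mf n (r.1+2) (c.1+1)))
            = 2 * mf n (r.1+1) (c.1+1) - mf n r.1 (c.1+1) - mf n (r.1+2) (c.1+1) by ring, this]
        simp [Fin.ext_iff]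

lemma gaussR (L : ℕ) : ∑ k ∈ Finset.range L, (k:ℝ) = L*((L:ℝ)-1)/2 := by
  induction L with
  | zero => simp
  | succ m ih =>
    rw [Finset.sum_range_succ, ih]
    push_cast
    ring

lemma rowsum (n a : ℕ) (ha : 1 ≤ a) (ha' : a ≤ n+1) :
    ∑ j ∈ Finset.range (n+1), mf n a (j+1) = (a:ℝ) * ((n:ℝ)+2-a) / 2 := by
  have hden : (n:ℝ)+2 ≠ 0 := by positivity
  rw [Finset.range_eq_Ico, ← Finset.sum_Ico_consecutive _ (Nat.zero_le a) ha']
  have h1 : ∑ j ∈ Finset.Ico 0 a, mf n a (j+1)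
      = ∑ j ∈ Finset.Ico 0 a, ((j:ℝ)+1) * ((n:ℝ)+2-(a:ℝ)) / ((n:ℝ)+2) := by
    refine Finset.sum_congr rfl (fun j hj => ?_)
    rw [Finset.mem_Ico] at hj
    unfold mf
    rw [min_eq_right (by omega : j+1 ≤ a), max_eq_left (by omega : j+1 ≤ a)]
    push_cast
    ring
  have h2 : ∑ j ∈ Finset.Ico a (n+1), mf n a (j+1)
      = ∑ j ∈ Finset.Ico a (n+1), (a:ℝ) * ((n:ℝ)+1-(j:ℝ)) / ((n:ℝ)+2) := by
    refine Finset.sum_congr rfl (fun j hj => ?_)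
    rw [Finset.mem_Ico] at hj
    unfold mf
    rw [min_eq_left (by omega : a ≤ j+1), max_eq_right (by omega : a ≤ j+1)]
    push_cast
    ring
  rw [h1, h2]
  have e1 : ∑ j ∈ Finset.Ico 0 a, ((j:ℝ)+1) * ((n:ℝ)+2-(a:ℝ)) / ((n:ℝ)+2)
      = ((a:ℝ)*((a:ℝ)-1)/2 + a) * (((n:ℝ)+2-(a:ℝ)) / ((n:ℝ)+2)) := by
    rw [← Finset.range_eq_Ico]
    rw [show (fun j : ℕ => ((j:ℝ)+1) * ((n:ℝ)+2-(a:ℝ)) / ((n:ℝ)+2))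
        = (fun j : ℕ => ((j:ℝ)+1) * (((n:ℝ)+2-(a:ℝ)) / ((n:ℝ)+2))) from funext (fun j => by ring)]
    rw [← Finset.sum_mul, Finset.sum_add_distrib, gaussR, Finset.sum_const,
      Finset.card_range, nsmul_eq_mul, mul_one]
  have e2 : ∑ j ∈ Finset.Ico a (n+1), (a:ℝ) * ((n:ℝ)+1-(j:ℝ)) / ((n:ℝ)+2)
      = ((a:ℝ) / ((n:ℝ)+2)) * (((n+1-a : ℕ):ℝ) * ((n:ℝ)+1-(a:ℝ)) - ((n+1-a:ℕ):ℝ)*(((n+1-a:ℕ):ℝ)-1)/2) := by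
    rw [Finset.sum_Ico_eq_sum_range]
    rw [show (fun j : ℕ => (a:ℝ) * ((n:ℝ)+1-(↑(a+j):ℝ)) / ((n:ℝ)+2))
        = (fun j : ℕ => ((a:ℝ)/((n:ℝ)+2)) * (((n:ℝ)+1-(a:ℝ)) - (j:ℝ))) from
      funext (fun j => by push_cast; ring)]
    rw [← Finset.mul_sum, Finset.sum_sub_distrib, Finset.sum_const, Finset.card_range,
      nsmul_eq_mul, gaussR]
  rw [e1, e2]
  have hcast : ((n+1-a : ℕ):ℝ) = (n:ℝ)+1-(a:ℝ) := by
    push_cast [Nat.cast_sub ha']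
    ring
  rw [hcast]
  field_simp
  ring


/-- if `n+1` is even then `‖T_{n+1}⁻¹‖_∞ = ((n+1)² + 2(n+1))/8`. -/
theorem stmt_3 (n : ℕ) (hn : 1 ≤ n) (he : Even (n+1)) :
    normInf (T (n+1))⁻¹ = (((n:ℝ)+1)^2 + 2*((n:ℝ)+1)) / 8 := by
  obtain ⟨m, hm⟩ : ∃ m, n = 2*m+1 := by
    obtain ⟨k, hk⟩ := he
    exact ⟨k-1, by omega⟩
  have hM : (T (n+1))⁻¹ = Minv n := Matrix.inv_eq_right_inv (Tmul n)
  rw [hM]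
  unfold normInf
  have hrow : ∀ r : Fin (n+1), (∑ c, |Minv n r c|) = ((r.1:ℝ)+1) * ((n:ℝ)+1-(r.1:ℝ)) / 2 := by
    intro r
    have habs : ∀ c : Fin (n+1), |Minv n r c| = Minv n r c := by
      intro c
      refine abs_of_nonneg ?_
      unfold Minv mf
      simp only [Matrix.of_apply]
      have h1 : (0:ℝ) ≤ ((min (r.1+1) (c.1+1) : ℕ):ℝ) := Nat.cast_nonneg _
      have h2 : (0:ℝ) ≤ (n:ℝ) + 2 - ((max (r.1+1) (c.1+1) : ℕ):ℝ) := by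
        have : (max (r.1+1) (c.1+1) : ℕ) ≤ n+2 := by
          have := r.2; have := c.2; omega
        have := (Nat.cast_le (α := ℝ)).mpr this
        push_cast at this ⊢
        linarith
      positivity
    rw [Finset.sum_congr rfl (fun c _ => habs c)]
    have : (∑ c : Fin (n+1), Minv n r c) = ∑ j ∈ Finset.range (n+1), mf n (r.1+1) (j+1) :=
      Fin.sum_univ_eq_sum_range (fun j => mf n (r.1+1) (j+1)) (n+1)
    rw [this, rowsum n (r.1+1) (by omega) (by have := r.2; omega)]
    push_cast
    ring
  apply le_antisymm
  · apply Finset.sup'_le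
    intro r _
    rw [hrow r]
    have h1 : (r.1 : ℝ) ≤ n := by
      have := r.2
      exact_mod_cast Nat.lt_succ_iff.mp this
    have hnr : (n:ℝ) = 2*(m:ℝ)+1 := by rw [hm]; push_cast; ring
    rcases le_or_gt r.1 m with hr | hr
    · have : (r.1:ℝ) ≤ m := by exact_mod_cast hr
      rw [hnr]
      nlinarith [mul_nonneg (by linarith : (0:ℝ) ≤ (m:ℝ) - r.1) (by linarith : (0:ℝ) ≤ (m:ℝ) + 1 - r.1)]
    · have : (m:ℝ) + 1 ≤ r.1 := by exact_mod_cast hr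
      rw [hnr]
      nlinarith [mul_nonneg (by linarith : (0:ℝ) ≤ (r.1:ℝ) - m - 1) (by linarith : (0:ℝ) ≤ (r.1:ℝ) - m)]
  · have hmem : (⟨m, by omega⟩ : Fin (n+1)) ∈ Finset.univ := Finset.mem_univ _
    have := Finset.le_sup' (fun r : Fin (n+1) => ∑ c, |Minv n r c|) hmem
    rw [hrow ⟨m, by omega⟩] at this
    refine le_trans (le_of_eq ?_) this
    have hnr : (n:ℝ) = 2*(m:ℝ)+1 := by rw [hm]; push_cast; ring
    simp only [hnr]
    push_cast
    ring
end

section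
/- If n+1 is odd, then the ∞-norm of the inverse of T_{n+1} equals (n+2)²/8, i.e. ‖T_{n+1}^{−1}‖_∞ = (n+2)²/8. -/
open Matrix Real Filter

/-! ### Auxiliary machinery for the explicit inverse of `T` -/

/-- entry of the explicit inverse of `T N` -/
noncomputable def auxg (N a b : ℕ) : ℝ :=
  ((min a b : ℕ) + 1 : ℝ) * ((N : ℝ) - ((max a b : ℕ) : ℝ)) / ((N : ℝ) + 1)

lemma auxg_nonneg {N a b : ℕ} (ha : a < N) (hb : b < N) : 0 ≤ auxg N a b := by
  have h1 : (0:ℝ) ≤ ((min a b : ℕ) : ℝ) + 1 := by positivity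
  have h2 : ((max a b : ℕ) : ℝ) ≤ N := by
    exact_mod_cast Nat.le_of_lt (max_lt ha hb)
  have h3 : (0:ℝ) ≤ (N : ℝ) + 1 := by positivity
  exact div_nonneg (mul_nonneg h1 (by linarith)) h3

lemma aux_key (N a b : ℕ) (ha : a < N) (hb : b < N) :
    2 * auxg N a b - (if a + 1 < N then auxg N (a+1) b else 0) -
      (if 1 ≤ a then auxg N (a-1) b else 0) = if a = b then 1 else 0 := by
  have hN1 : (N:ℝ) + 1 ≠ 0 := by positivity
  rcases lt_trichotomy a b with h | h | h
  · rw [if_neg (show ¬ a = b by omega), if_pos (show a + 1 < N by omega)]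
    rcases Nat.eq_zero_or_pos a with h0 | h0
    · subst h0
      rw [if_neg (show ¬ 1 ≤ 0 by omega)]
      simp only [auxg, Nat.min_eq_left (show 0 ≤ b by omega),
        Nat.max_eq_right (show 0 ≤ b by omega),
        Nat.min_eq_left (show 1 ≤ b by omega), Nat.max_eq_right (show 1 ≤ b by omega)]
      push_cast
      ring
    · rw [if_pos (show 1 ≤ a by omega)]
      simp only [auxg, Nat.min_eq_left (show a ≤ b by omega),
        Nat.max_eq_right (show a ≤ b by omega),
        Nat.min_eq_left (show a + 1 ≤ b by omega), Nat.max_eq_right (show a + 1 ≤ b by omega),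
        Nat.min_eq_left (show a - 1 ≤ b by omega), Nat.max_eq_right (show a - 1 ≤ b by omega)]
      have hm : ((a - 1 : ℕ) : ℝ) = (a : ℝ) - 1 := by push_cast [h0]; ring
      rw [hm]
      push_cast
      ring
  · subst h
    rw [if_pos rfl]
    rcases Nat.eq_zero_or_pos a with h0 | h0
    · subst h0
      rw [if_neg (show ¬ 1 ≤ 0 by omega)]
      rcases Nat.lt_or_ge 1 N with h1 | h1
      · rw [if_pos (show 0 + 1 < N from h1)]
        simp only [auxg, Nat.min_eq_left (show 0 ≤ 0 by omega),
          Nat.max_eq_right (show 0 ≤ 0 by omega),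
          Nat.min_eq_right (show 0 ≤ 1 by omega), Nat.max_eq_left (show 0 ≤ 1 by omega)]
        push_cast
        field_simp
        ring
      · rw [if_neg (show ¬ 0 + 1 < N by omega)]
        have hN : N = 1 := by omega
        subst hN
        simp only [auxg]
        norm_num
    · rw [if_pos (show 1 ≤ a from h0)]
      have hm : ((a - 1 : ℕ) : ℝ) = (a : ℝ) - 1 := by push_cast [h0]; ring
      rcases Nat.lt_or_ge (a+1) N with h1 | h1
      · rw [if_pos (show a + 1 < N from h1)]
        simp only [auxg, min_self, max_self,
          Nat.min_eq_right (show a ≤ a + 1 by omega), Nat.max_eq_left (show a ≤ a + 1 by omega),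
          Nat.min_eq_left (show a - 1 ≤ a by omega), Nat.max_eq_right (show a - 1 ≤ a by omega),
          hm]
        push_cast
        field_simp
        ring
      · rw [if_neg (show ¬ a + 1 < N by omega)]
        have hN : N = a + 1 := by omega
        subst hN
        simp only [auxg, min_self, max_self,
          Nat.min_eq_left (show a - 1 ≤ a by omega), Nat.max_eq_right (show a - 1 ≤ a by omega),
          hm]
        push_cast
        field_simp
        ring
  · rw [if_neg (show ¬ a = b by omega), if_pos (show 1 ≤ a by omega)]
    have hm : ((a - 1 : ℕ) : ℝ) = (a : ℝ) - 1 := by push_cast [show 1 ≤ a by omega]; ring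
    rcases Nat.lt_or_ge (a+1) N with h1 | h1
    · rw [if_pos (show a + 1 < N from h1)]
      simp only [auxg, Nat.min_eq_right (show b ≤ a by omega),
        Nat.max_eq_left (show b ≤ a by omega),
        Nat.min_eq_right (show b ≤ a + 1 by omega), Nat.max_eq_left (show b ≤ a + 1 by omega),
        Nat.min_eq_right (show b ≤ a - 1 by omega), Nat.max_eq_left (show b ≤ a - 1 by omega), hm]
      push_cast
      ring
    · rw [if_neg (show ¬ a + 1 < N by omega)]
      have hN : N = a + 1 := by omega
      subst hN
      simp only [auxg, Nat.min_eq_right (show b ≤ a by omega),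
        Nat.max_eq_left (show b ≤ a by omega),
        Nat.min_eq_right (show b ≤ a - 1 by omega), Nat.max_eq_left (show b ≤ a - 1 by omega), hm]
      push_cast
      ring

/-- the entries of `T` as a function of natural indices -/
noncomputable def auxT (a k : ℕ) : ℝ :=
  if a = k then 2 else if a + 1 = k ∨ k + 1 = a then -1 else 0

lemma aux_sum_key (N a b : ℕ) (ha : a < N) (hb : b < N) :
    ∑ k ∈ Finset.range N, auxT a k * auxg N k b = if a = b then 1 else 0 := by
  have step : ∀ k, auxT a k * auxg N k b =
      (if k = a then 2 * auxg N a b else 0) + (if k = a + 1 then -auxg N k b else 0)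
        + (if k + 1 = a then -auxg N k b else 0) := by
    intro k
    by_cases h1 : a = k
    · subst h1
      rw [show auxT a a = 2 by unfold auxT; rw [if_pos rfl],
        if_pos rfl, if_neg (by omega), if_neg (by omega)]
      ring
    · by_cases h2 : a + 1 = k
      · rw [show auxT a k = -1 by unfold auxT; rw [if_neg h1, if_pos (Or.inl h2)],
          if_neg (by omega), if_pos (by omega), if_neg (by omega)]
        ring
      · by_cases h3 : k + 1 = a
        · rw [show auxT a k = -1 by unfold auxT; rw [if_neg h1, if_pos (Or.inr h3)],
            if_neg (by omega), if_neg (by omega), if_pos h3]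
          ring
        · rw [show auxT a k = 0 by
            unfold auxT; rw [if_neg h1, if_neg (by tauto)],
            if_neg (by omega), if_neg (by omega), if_neg h3]
          ring
  rw [Finset.sum_congr rfl fun k _ => step k]
  rw [Finset.sum_add_distrib, Finset.sum_add_distrib, Finset.sum_ite_eq' (Finset.range N) a,
    Finset.sum_ite_eq' (Finset.range N) (a+1)]
  have third : (∑ k ∈ Finset.range N, if k + 1 = a then -auxg N k b else 0)
      = if 1 ≤ a then -auxg N (a-1) b else 0 := by
    rcases Nat.eq_zero_or_pos a with h0 | h0
    · subst h0; simp
    · rw [if_pos (show 1 ≤ a by omega)]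
      have e : (∑ k ∈ Finset.range N, if k + 1 = a then -auxg N k b else 0)
          = ∑ k ∈ Finset.range N, if k = a - 1 then -auxg N k b else 0 :=
        Finset.sum_congr rfl fun k _ => by
          simp only [show (k + 1 = a) ↔ (k = a - 1) from by omega]
      rw [e, Finset.sum_ite_eq' (Finset.range N) (a-1),
        if_pos (Finset.mem_range.2 (by omega))]
  rw [third, if_pos (Finset.mem_range.2 ha)]
  have hk := aux_key N a b ha hb
  simp only [Finset.mem_range]
  split_ifs at hk ⊢ <;> linarith

lemma aux_sumId (m : ℕ) : ∑ b ∈ Finset.range m, ((b:ℝ) + 1) = m * (m+1) / 2 := by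
  induction m with
  | zero => simp
  | succ m ih => rw [Finset.sum_range_succ, ih]; push_cast; ring

lemma aux_rowSum (N a : ℕ) (ha : a < N) :
    ∑ b ∈ Finset.range N, auxg N a b = ((a:ℝ)+1) * ((N:ℝ) - a) / 2 := by
  obtain ⟨c, hc⟩ : ∃ c, N = (a+1) + c := ⟨N - (a+1), by omega⟩
  subst hc
  rw [Finset.sum_range_add]
  have h1 : ∑ b ∈ Finset.range (a+1), auxg (a+1+c) a b
      = (∑ b ∈ Finset.range (a+1), ((b:ℝ)+1)) * (((a:ℝ)+1+c - a) / ((a:ℝ)+1+c+1)) := by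
    rw [Finset.sum_mul]
    refine Finset.sum_congr rfl fun b hb => ?_
    rw [Finset.mem_range] at hb
    simp only [auxg, Nat.min_eq_right (show b ≤ a by omega),
      Nat.max_eq_left (show b ≤ a by omega)]
    push_cast
    ring
  have h2 : ∑ b ∈ Finset.range c, auxg (a+1+c) a (a+1+b)
      = (∑ b ∈ Finset.range c, ((c:ℝ) - b)) * (((a:ℝ)+1) / ((a:ℝ)+1+c+1)) := by
    rw [Finset.sum_mul]
    refine Finset.sum_congr rfl fun b hb => ?_
    rw [Finset.mem_range] at hb
    simp only [auxg, Nat.min_eq_left (show a ≤ a+1+b by omega),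
      Nat.max_eq_right (show a ≤ a+1+b by omega)]
    push_cast
    ring
  have h3 : ∑ b ∈ Finset.range c, ((c:ℝ) - b) = c * (c+1) / 2 := by
    have e1 : ∑ b ∈ Finset.range c, ((c:ℝ) - b)
        = ∑ b ∈ Finset.range c, ((c:ℝ) + 1 - (b + 1)) :=
      Finset.sum_congr rfl fun b _ => by ring
    rw [e1, Finset.sum_sub_distrib, aux_sumId, Finset.sum_const, Finset.card_range]
    ring
  rw [h1, h2, h3, aux_sumId]
  have hden : ((a:ℝ)+1+c+1) ≠ 0 := by positivity
  field_simp
  push_cast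
  ring

lemma aux_T_apply (N : ℕ) (i k : Fin N) : T N i k = auxT i.1 k.1 := by
  simp only [T, trid, auxT, Matrix.of_apply, Fin.ext_iff]

/-- if `n+1` is odd then `‖T_{n+1}⁻¹‖_∞ = (n+2)²/8`. -/
theorem stmt_4 (n : ℕ) (hn : 1 ≤ n) (ho : Odd (n+1)) :
    normInf (T (n+1))⁻¹ = ((n:ℝ)+2)^2 / 8 := by
  obtain ⟨m, hm⟩ : ∃ m, n = 2 * m := by
    obtain ⟨k, hk⟩ := ho; exact ⟨k, by omega⟩
  have hinv : (T (n+1))⁻¹ = Matrix.of (fun i j : Fin (n+1) => auxg (n+1) i.1 j.1) := by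
    apply Matrix.inv_eq_right_inv
    ext i j
    rw [Matrix.mul_apply]
    have e : ∀ k : Fin (n+1),
        T (n+1) i k * Matrix.of (fun i j : Fin (n+1) => auxg (n+1) i.1 j.1) k j
          = auxT i.1 k.1 * auxg (n+1) k.1 j.1 := fun k => by rw [aux_T_apply]; rfl
    rw [Finset.sum_congr rfl fun k _ => e k,
      Fin.sum_univ_eq_sum_range (fun s => auxT i.1 s * auxg (n+1) s j.1) (n+1),
      aux_sum_key (n+1) i.1 j.1 i.isLt j.isLt, Matrix.one_apply]
    simp [Fin.ext_iff]
  rw [hinv]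
  unfold normInf
  have hrow : ∀ i : Fin (n+1),
      (∑ c, |Matrix.of (fun i j : Fin (n+1) => auxg (n+1) i.1 j.1) i c|)
        = ((i.1:ℝ)+1) * (((n:ℝ)+1) - i.1) / 2 := by
    intro i
    have e1 : ∀ c : Fin (n+1),
        |Matrix.of (fun i j : Fin (n+1) => auxg (n+1) i.1 j.1) i c| = auxg (n+1) i.1 c.1 :=
      fun c => abs_of_nonneg (auxg_nonneg i.isLt c.isLt)
    rw [Finset.sum_congr rfl fun c _ => e1 c,
      Fin.sum_univ_eq_sum_range (fun b => auxg (n+1) i.1 b) (n+1),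
      aux_rowSum (n+1) i.1 i.isLt]
    push_cast
    ring
  apply le_antisymm
  · apply Finset.sup'_le
    intro i _
    rw [hrow i]
    have h1 : (i.1 : ℝ) ≤ n := by exact_mod_cast Nat.lt_succ_iff.mp i.isLt
    have h2 : (0:ℝ) ≤ (i.1 : ℝ) := by positivity
    nlinarith [sq_nonneg ((i.1:ℝ) + 1 - (((n:ℝ)+1) - i.1))]
  · refine le_trans ?_ (Finset.le_sup' _ (Finset.mem_univ (⟨m, by omega⟩ : Fin (n+1))))
    rw [hrow ⟨m, by omega⟩]
    apply le_of_eq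
    subst hm
    push_cast
    ring
end

section
/- For every n ≥ 1 and ϑ ∈ (0,1), the entries of R_{n+1} are given explicitly by: for all r ∈ {1,…,n+1}, (R_{n+1})_{r,1} = (h(r−1)−1)/(h(ϑ−1)+1) − h²(h(r−1)−1)/(h+1), and for all r ∈ {1,…,n+1} and c ∈ {2,…,n+1}, (R_{n+1})_{r,c} = h²(2−ϑ)(1−(c−1)h)(1−h(r−1)) / ((h+1)(h(ϑ−1)+1)). -/
open Matrix Real Filter

/-- the vector `v_h` with first component `ϑh²-2`, second `(1-ϑ)h²+1`, the rest `0` -/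
noncomputable def vh (n : ℕ) (ϑ : ℝ) : Fin (n+1) → ℝ :=
  fun i => if i.1 = 0 then ϑ * (h n)^2 - 2 else if i.1 = 1 then (1-ϑ) * (h n)^2 + 1 else 0

/-- the first standard basis vector `e₁` -/
def e1 (n : ℕ) : Fin (n+1) → ℝ := fun i => if i.1 = 0 then 1 else 0

/-- the Coco–Russo matrix `A_h = S_{n+1} + h⁻² e₁ v_hᵀ` -/
noncomputable def A (n : ℕ) (ϑ : ℝ) : Matrix (Fin (n+1)) (Fin (n+1)) ℝ :=
  S n + ((h n)^2)⁻¹ • Matrix.vecMulVec (e1 n) (vh n ϑ)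

/-- `R_{n+1} = (h⁻² S⁻¹ e₁ v_hᵀ S⁻¹) / (1 + h⁻² v_hᵀ S⁻¹ e₁)` -/
noncomputable def R (n : ℕ) (ϑ : ℝ) : Matrix (Fin (n+1)) (Fin (n+1)) ℝ :=
  (1 + ((h n)^2)⁻¹ * (vh n ϑ ⬝ᵥ ((S n)⁻¹ *ᵥ e1 n)))⁻¹ •
    (((h n)^2)⁻¹ • Matrix.vecMulVec ((S n)⁻¹ *ᵥ e1 n) (vh n ϑ ᵥ* (S n)⁻¹))



noncomputable def Gf (n c : ℕ) : ℕ → ℝ :=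
  fun k => ((min k c : ℕ) + 1 : ℝ) * ((n:ℝ) + 1 - ((max k c : ℕ) : ℝ)) / ((n:ℝ) + 2)

noncomputable def P (n : ℕ) : Matrix (Fin (n+1)) (Fin (n+1)) ℝ :=
  Matrix.of fun r c => Gf n c.1 r.1

lemma Gf_le {n c : ℕ} (k : ℕ) (h : k ≤ c) :
    Gf n c k = ((k:ℝ) + 1) * ((n:ℝ) + 1 - (c:ℝ)) / ((n:ℝ) + 2) := by
  unfold Gf; rw [min_eq_left h, max_eq_right h]

lemma Gf_ge {n c : ℕ} (k : ℕ) (h : c ≤ k) :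
    Gf n c k = ((c:ℝ) + 1) * ((n:ℝ) + 1 - (k:ℝ)) / ((n:ℝ) + 2) := by
  unfold Gf; rw [min_eq_right h, max_eq_left h]

lemma trid_row_sum (n : ℕ) (d o : ℝ) (r : Fin (n+1)) (g : ℕ → ℝ) :
    ∑ k : Fin (n+1), trid (n+1) d o r k * g k.1
      = d * g r.1 + (if 1 ≤ r.1 then o * g (r.1-1) else 0)
        + (if r.1 + 1 ≤ n then o * g (r.1+1) else 0) := by
  have hconv : ∀ k : Fin (n+1), trid (n+1) d o r k * g k.1 =
      (if k.1 = r.1 then d * g k.1 else 0) + (if k.1 + 1 = r.1 then o * g k.1 else 0)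
        + (if k.1 = r.1 + 1 then o * g k.1 else 0) := by
    intro k
    simp only [trid, Matrix.of_apply, Fin.ext_iff]
    rcases Nat.lt_trichotomy k.1 r.1 with hlt | heq | hgt
    · have h0 : ¬ (r.1 = k.1) := by omega
      have h0' : ¬ (k.1 = r.1) := by omega
      have h1 : ¬ (r.1 + 1 = k.1) := by omega
      have h2 : ¬ (k.1 = r.1 + 1) := by omega
      by_cases h3 : k.1 + 1 = r.1 <;> simp [h0, h0', h1, h2, h3]
    · have h1 : ¬ (r.1 + 1 = k.1) := by omega
      have h2 : ¬ (k.1 + 1 = r.1) := by omega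
      have h3 : ¬ (k.1 = r.1 + 1) := by omega
      simp [heq, h1, h2, h3]
    · have h0 : ¬ (r.1 = k.1) := by omega
      have h0' : ¬ (k.1 = r.1) := by omega
      have h1 : ¬ (k.1 + 1 = r.1) := by omega
      by_cases h3 : r.1 + 1 = k.1
      · have h4 : k.1 = r.1 + 1 := by omega
        simp [h0, h1, h4]; omega
      · have h4 : ¬ (k.1 = r.1 + 1) := by omega
        simp [h0, h0', h1, h3, h4]
  rw [Finset.sum_congr rfl (fun k _ => hconv k)]
  rw [Finset.sum_add_distrib, Finset.sum_add_distrib]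
  have e1 : ∑ k : Fin (n+1), (if k.1 = r.1 then d * g k.1 else 0) = d * g r.1 := by
    rw [Fin.sum_univ_eq_sum_range (fun i => if i = r.1 then d * g i else 0)]
    rw [Finset.sum_ite_eq' (Finset.range (n+1)) r.1 (fun i => d * g i)]
    simp [r.2]
  have e2 : ∑ k : Fin (n+1), (if k.1 + 1 = r.1 then o * g k.1 else 0)
      = if 1 ≤ r.1 then o * g (r.1-1) else 0 := by
    rw [Fin.sum_univ_eq_sum_range (fun i => if i + 1 = r.1 then o * g i else 0)]
    by_cases h1 : 1 ≤ r.1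
    · have : ∀ i, (i + 1 = r.1) = (i = r.1 - 1) := by intro i; simp; omega
      simp only [this]
      rw [Finset.sum_ite_eq' (Finset.range (n+1)) (r.1-1) (fun i => o * g i)]
      have : r.1 - 1 ∈ Finset.range (n+1) := by simp only [Finset.mem_range]; omega
      simp [this, h1]
    · have : ∀ i, (i + 1 = r.1) = False := by intro i; simp; omega
      simp [this, h1]
  have e3 : ∑ k : Fin (n+1), (if k.1 = r.1 + 1 then o * g k.1 else 0)
      = if r.1 + 1 ≤ n then o * g (r.1+1) else 0 := by
    rw [Fin.sum_univ_eq_sum_range (fun i => if i = r.1 + 1 then o * g i else 0)]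
    rw [Finset.sum_ite_eq' (Finset.range (n+1)) (r.1+1) (fun i => o * g i)]
    by_cases h1 : r.1 + 1 ≤ n
    · have : r.1 + 1 ∈ Finset.range (n+1) := by simp; omega
      simp [this, h1]
    · have : r.1 + 1 ∉ Finset.range (n+1) := by simp; omega
      simp [this, h1]
  rw [e1, e2, e3]

lemma TP (n : ℕ) : T (n+1) * P n = 1 := by
  ext r c
  rw [Matrix.mul_apply]
  have hs : ∀ k : Fin (n+1), T (n+1) r k * P n k c = trid (n+1) 2 (-1) r k * Gf n c.1 k.1 :=
    fun k => rfl
  rw [Finset.sum_congr rfl (fun k _ => hs k), trid_row_sum, Matrix.one_apply]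
  have hden : ((n:ℝ) + 2) ≠ 0 := by positivity
  have hr : r.1 ≤ n := by omega
  have hc : c.1 ≤ n := by omega
  have hrc : (r = c) ↔ (r.1 = c.1) := Fin.ext_iff
  by_cases h1 : 1 ≤ r.1
  · rw [if_pos h1]
    by_cases h2 : r.1 + 1 ≤ n
    · rw [if_pos h2]
      rcases Nat.lt_trichotomy r.1 c.1 with hlt | heq | hgt
      · rw [if_neg (hrc.not.mpr (by omega))]
        rw [Gf_le r.1 (by omega), Gf_le (r.1-1) (by omega), Gf_le (r.1+1) (by omega)]
        push_cast [Nat.cast_sub h1]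
        field_simp
        ring
      · rw [if_pos (hrc.mpr heq)]
        rw [Gf_ge r.1 (by omega), Gf_le (r.1-1) (by omega), Gf_ge (r.1+1) (by omega)]
        push_cast [Nat.cast_sub h1]
        rw [heq]
        field_simp
        ring
      · rw [if_neg (hrc.not.mpr (by omega))]
        rw [Gf_ge r.1 (by omega), Gf_ge (r.1-1) (by omega), Gf_ge (r.1+1) (by omega)]
        push_cast [Nat.cast_sub h1]
        field_simp
        ring
    · rw [if_neg h2]
      have hrn : r.1 = n := by omega
      rcases Nat.lt_trichotomy r.1 c.1 with hlt | heq | hgt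
      · omega
      · rw [if_pos (hrc.mpr heq)]
        rw [Gf_ge r.1 (by omega), Gf_le (r.1-1) (by omega)]
        push_cast [Nat.cast_sub h1]
        rw [heq, ← heq, hrn]
        field_simp
        ring
      · rw [if_neg (hrc.not.mpr (by omega))]
        rw [Gf_ge r.1 (by omega), Gf_ge (r.1-1) (by omega)]
        push_cast [Nat.cast_sub h1]
        rw [hrn]
        field_simp
        ring
  · rw [if_neg h1]
    have hr0 : r.1 = 0 := by omega
    by_cases h2 : r.1 + 1 ≤ n
    · rw [if_pos h2]
      rcases Nat.eq_zero_or_pos c.1 with hc0 | hcp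
      · rw [if_pos (hrc.mpr (by omega))]
        rw [Gf_ge r.1 (by omega), Gf_ge (r.1+1) (by omega)]
        rw [hr0, hc0]
        push_cast
        field_simp
        ring
      · rw [if_neg (hrc.not.mpr (by omega))]
        rw [Gf_le r.1 (by omega), Gf_le (r.1+1) (by omega)]
        rw [hr0]
        push_cast
        field_simp
        ring
    · rw [if_neg h2]
      have hn0 : n = 0 := by omega
      have hc0 : c.1 = 0 := by omega
      rw [if_pos (hrc.mpr (by omega))]
      rw [Gf_ge r.1 (by omega), hr0, hc0, hn0]
      push_cast
      norm_num

lemma h_ne (n : ℕ) : h n ≠ 0 := by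
  unfold h; positivity
lemma hsq_ne (n : ℕ) : (h n)^2 ≠ 0 := pow_ne_zero 2 (h_ne n)

lemma S_inv (n : ℕ) : (S n)⁻¹ = (h n)^2 • P n := by
  apply Matrix.inv_eq_right_inv
  show (((h n)^2)⁻¹ • T (n+1)) * ((h n)^2 • P n) = 1
  rw [Matrix.smul_mul, Matrix.mul_smul, smul_smul, inv_mul_cancel₀ (hsq_ne n), one_smul, TP]

lemma Sinv_e1 (n : ℕ) (r : Fin (n+1)) :
    ((S n)⁻¹ *ᵥ e1 n) r = (h n)^2 * Gf n 0 r.1 := by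
  rw [S_inv]
  show (fun c => ((h n)^2 • P n) r c) ⬝ᵥ e1 n = _
  rw [dotProduct]
  have key : ∀ c : Fin (n+1), ((h n)^2 • P n) r c * e1 n c
      = if c = (0 : Fin (n+1)) then (h n)^2 * Gf n 0 r.1 else 0 := by
    intro c
    by_cases hc : c = 0
    · subst hc; simp [e1, P, Matrix.smul_apply, smul_eq_mul]
    · have hc' : c.1 ≠ 0 := fun hh => hc (Fin.ext hh)
      simp [e1, hc', hc]
  rw [Finset.sum_congr rfl (fun c _ => key c), Finset.sum_ite_eq' Finset.univ]
  simp

lemma vh_dot (n : ℕ) (hn : 1 ≤ n) (ϑ : ℝ) (w : Fin (n+1) → ℝ) :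
    vh n ϑ ⬝ᵥ w = (ϑ * (h n)^2 - 2) * w ⟨0, by omega⟩
      + ((1-ϑ) * (h n)^2 + 1) * w ⟨1, by omega⟩ := by
  rw [dotProduct]
  have key : ∀ i : Fin (n+1), vh n ϑ i * w i
      = (if i = (⟨0, by omega⟩ : Fin (n+1)) then (ϑ * (h n)^2 - 2) * w i else 0)
        + (if i = (⟨1, by omega⟩ : Fin (n+1)) then ((1-ϑ) * (h n)^2 + 1) * w i else 0) := by
    intro i
    simp only [vh, Fin.ext_iff]
    rcases Nat.lt_trichotomy i.1 1 with h0 | h1 | h2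
    · have hv : i.1 = 0 := by omega
      simp [hv]
    · simp [h1]
    · have v0 : i.1 ≠ 0 := by omega
      have v1 : i.1 ≠ 1 := by omega
      simp [v0, v1]
  rw [Finset.sum_congr rfl (fun i _ => key i), Finset.sum_add_distrib,
    Finset.sum_ite_eq' Finset.univ, Finset.sum_ite_eq' Finset.univ]
  simp

lemma vh_Sinv (n : ℕ) (hn : 1 ≤ n) (ϑ : ℝ) (c : Fin (n+1)) :
    (vh n ϑ ᵥ* (S n)⁻¹) c = (ϑ * (h n)^2 - 2) * ((h n)^2 * Gf n c.1 0)
      + ((1-ϑ) * (h n)^2 + 1) * ((h n)^2 * Gf n c.1 1) := by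
  rw [S_inv]
  show vh n ϑ ⬝ᵥ (fun r => ((h n)^2 • P n) r c) = _
  rw [vh_dot n hn]
  simp [P, Matrix.smul_apply, smul_eq_mul]


/-- explicit entries of `R_{n+1}` (rows/columns indexed by `1,…,n+1`, so the paper's
`r` is `r₀+1` for `r₀ : Fin (n+1)`, and the first column is `c₀ = 0`):
`(R)_{r,1} = (h(r−1)−1)/(h(ϑ−1)+1) − h²(h(r−1)−1)/(h+1)` and, for `c ≥ 2`,
`(R)_{r,c} = h²(2−ϑ)(1−(c−1)h)(1−h(r−1))/((h+1)(h(ϑ−1)+1))`. -/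
theorem stmt_7 (n : ℕ) (hn : 1 ≤ n) (ϑ : ℝ) (hϑ : ϑ ∈ Set.Ioo (0:ℝ) 1) :
    (∀ r : Fin (n+1),
      R n ϑ r 0 = (h n * r.1 - 1) / (h n * (ϑ - 1) + 1)
                  - (h n)^2 * (h n * r.1 - 1) / (h n + 1)) ∧
    (∀ r c : Fin (n+1), c ≠ 0 →
      R n ϑ r c = (h n)^2 * (2 - ϑ) * (1 - c.1 * h n) * (1 - h n * r.1)
                  / ((h n + 1) * (h n * (ϑ - 1) + 1))) := by
  obtain ⟨hϑ0, hϑ1⟩ := hϑ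
  have hm1 : ((n:ℝ) + 1) ≠ 0 := by positivity
  have hm2 : ((n:ℝ) + 2) ≠ 0 := by positivity
  have hn1 : (1:ℝ) ≤ (n:ℝ) := by exact_mod_cast hn
  have hmϑ : ((n:ℝ) + ϑ) ≠ 0 := by positivity
  have hh : h n = 1 / ((n:ℝ) + 1) := rfl
  -- the scalar
  have hK : (1 + ((h n)^2)⁻¹ * (vh n ϑ ⬝ᵥ ((S n)⁻¹ *ᵥ e1 n)))
      = ((n:ℝ) + ϑ) / (((n:ℝ)+1)^2 * ((n:ℝ)+2)) := by
    rw [vh_dot n hn]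
    rw [Sinv_e1, Sinv_e1]
    rw [Gf_ge 0 (le_refl 0), Gf_ge 1 (Nat.zero_le 1)]
    rw [hh]
    push_cast
    field_simp
    ring
  have hGr0 : ∀ r : Fin (n+1), Gf n 0 r.1
      = 1 * ((n:ℝ) + 1 - (r.1:ℝ)) / ((n:ℝ) + 2) := by
    intro r; rw [Gf_ge r.1 (Nat.zero_le _)]; norm_num
  constructor
  · intro r
    rw [R, Matrix.smul_apply, Matrix.smul_apply, Matrix.vecMulVec_apply, hK]
    rw [Sinv_e1, vh_Sinv n hn]
    simp only [Fin.val_zero]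
    rw [hGr0 r]
    rw [Gf_ge 0 (le_refl 0), Gf_ge 1 (Nat.zero_le 1)]
    rw [hh]
    push_cast [smul_eq_mul]
    have hmϑ' : ϑ - 1 + ((n:ℝ) + 1) ≠ 0 := by rw [show ϑ - 1 + ((n:ℝ) + 1) = (n:ℝ) + ϑ by ring]; exact hmϑ
    field_simp
    ring
  · intro r c hc
    have hc1 : 1 ≤ c.1 := by
      rcases Nat.eq_zero_or_pos c.1 with h0 | h1
      · exact absurd (Fin.ext h0) hc
      · omega
    rw [R, Matrix.smul_apply, Matrix.smul_apply, Matrix.vecMulVec_apply, hK]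
    rw [Sinv_e1, vh_Sinv n hn]
    rw [hGr0 r]
    rw [Gf_le 0 (by omega), Gf_le 1 hc1]
    rw [hh]
    push_cast [smul_eq_mul]
    have hmϑ' : ϑ - 1 + ((n:ℝ) + 1) ≠ 0 := by rw [show ϑ - 1 + ((n:ℝ) + 1) = (n:ℝ) + ϑ by ring]; exact hmϑ
    field_simp
    ring
end

section
/- For every n ≥ 1 and ϑ ∈ (0,1), the induced ∞-norm of R_{n+1} is attained on its first row and equals ‖R_{n+1}‖_∞ = (1/2)·(h(2−ϑ)(1−h) − 2h²(h(ϑ−1)+1) + 2(h+1)) / ((h+1)(h(ϑ−1)+1)); in particular ‖R_{n+1}‖_∞ → 1 as n → ∞ (i.e. as h → 0). -/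
open Matrix Real Filter

/-- entries of the inverse of `T`, as a function on `ℕ` -/
noncomputable def mN (n : ℕ) (i j : ℕ) : ℝ :=
  if i ≤ j then ((i:ℝ)+1) * ((n:ℝ)+1-(j:ℝ)) / ((n:ℝ)+2)
  else ((j:ℝ)+1) * ((n:ℝ)+1-(i:ℝ)) / ((n:ℝ)+2)

def tN : ℕ → ℕ → ℝ := fun p k => if p = k then 2 else if p + 1 = k ∨ k + 1 = p then -1 else 0

noncomputable def Mmat (n : ℕ) : Matrix (Fin (n+1)) (Fin (n+1)) ℝ :=
  Matrix.of fun i j => mN n i.1 j.1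

lemma mN_le (n i j : ℕ) (hij : i ≤ j) :
    mN n i j = ((i:ℝ)+1) * ((n:ℝ)+1-(j:ℝ)) / ((n:ℝ)+2) := if_pos hij

lemma mN_ge (n i j : ℕ) (hij : j ≤ i) :
    mN n i j = ((j:ℝ)+1) * ((n:ℝ)+1-(i:ℝ)) / ((n:ℝ)+2) := by
  unfold mN
  split_ifs with hle
  · have : i = j := le_antisymm hle hij
    subst this; ring
  · rfl

lemma T_apply (N : ℕ) (i j : Fin N) : T N i j = tN i.1 j.1 := by
  simp only [T, trid, tN, Matrix.of_apply, Fin.ext_iff]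

lemma key_s9 (n p q : ℕ) (hn : 1 ≤ n) (hp : p ≤ n) (hq : q ≤ n) :
    ∑ k ∈ Finset.range (n+1), tN p k * mN n k q = if p = q then 1 else 0 := by
  have hn2 : ((n:ℝ)+2) ≠ 0 := by positivity
  rcases Nat.eq_zero_or_pos p with rfl | hp1
  · have hsub : ({0, 1} : Finset ℕ) ⊆ Finset.range (n+1) := by
      intro k hk
      simp only [Finset.mem_insert, Finset.mem_singleton] at hk
      rcases hk with rfl | rfl <;> simp [Finset.mem_range] <;> omega
    rw [← Finset.sum_subset hsub (fun k hk hks => ?_), Finset.sum_pair (by omega)]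
    · have t00 : tN 0 0 = 2 := by simp [tN]
      have t01 : tN 0 1 = -1 := by simp [tN]
      rw [t00, t01]
      rcases Nat.eq_zero_or_pos q with rfl | hq1
      · rw [mN_ge n 0 0 le_rfl, mN_ge n 1 0 (by omega), if_pos rfl]
        push_cast
        field_simp
        ring
      · rw [mN_le n 0 q (by omega), mN_le n 1 q hq1, if_neg (by omega)]
        push_cast
        field_simp
        ring
    · simp only [Finset.mem_insert, Finset.mem_singleton, not_or] at hks
      unfold tN
      rw [if_neg (by omega), if_neg (by omega), zero_mul]
  · obtain ⟨r, rfl⟩ : ∃ r, p = r + 1 := ⟨p - 1, by omega⟩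
    have trr : tN (r+1) (r+1) = 2 := by simp [tN]
    have trl : tN (r+1) r = -1 := by unfold tN; rw [if_neg (by omega), if_pos (by omega)]
    rcases eq_or_lt_of_le hp with hpn | hplt
    · subst hpn
      have hsub : ({r, r+1} : Finset ℕ) ⊆ Finset.range (r+1+1) := by
        intro k hk
        simp only [Finset.mem_insert, Finset.mem_singleton] at hk
        rcases hk with rfl | rfl <;> simp [Finset.mem_range] <;> omega
      rw [← Finset.sum_subset hsub (fun k hk hks => ?_), Finset.sum_pair (by omega)]
      · rw [trr, trl]
        rcases eq_or_lt_of_le hq with hq1 | hq2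
        · subst hq1
          rw [mN_le (r+1) r (r+1) (by omega), mN_le (r+1) (r+1) (r+1) le_rfl, if_pos rfl]
          push_cast
          field_simp
          ring
        · have hqr : q ≤ r := by omega
          rw [mN_ge (r+1) r q hqr, mN_ge (r+1) (r+1) q (by omega), if_neg (by omega)]
          push_cast
          field_simp
          ring
      · simp only [Finset.mem_insert, Finset.mem_singleton, not_or] at hks
        simp only [Finset.mem_range] at hk
        unfold tN
        rw [if_neg (by omega), if_neg (by omega), zero_mul]
    · have hsub : ({r, r+1, r+2} : Finset ℕ) ⊆ Finset.range (n+1) := by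
        intro k hk
        simp only [Finset.mem_insert, Finset.mem_singleton] at hk
        rcases hk with rfl | rfl | rfl <;> simp [Finset.mem_range] <;> omega
      have trrr : tN (r+1) (r+2) = -1 := by unfold tN; rw [if_neg (by omega), if_pos (by omega)]
      rw [← Finset.sum_subset hsub (fun k hk hks => ?_)]
      · rw [show ({r, r+1, r+2} : Finset ℕ) = insert r {r+1, r+2} from rfl,
          Finset.sum_insert (by simp), Finset.sum_pair (by omega), trr, trl, trrr]
        rcases lt_trichotomy q (r+1) with hql | hq1 | hqg
        · have hqr : q ≤ r := by omega
          rw [mN_ge n r q hqr, mN_ge n (r+1) q (by omega), mN_ge n (r+2) q (by omega),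
            if_neg (by omega)]
          push_cast
          field_simp
          ring
        · subst hq1
          rw [mN_le n r (r+1) (by omega), mN_le n (r+1) (r+1) le_rfl,
            mN_ge n (r+2) (r+1) (by omega), if_pos rfl]
          push_cast
          field_simp
          ring
        · rw [mN_le n r q (by omega), mN_le n (r+1) q (by omega), mN_le n (r+2) q (by omega),
            if_neg (by omega)]
          push_cast
          field_simp
          ring
      · simp only [Finset.mem_insert, Finset.mem_singleton, not_or] at hks
        unfold tN
        rw [if_neg (by omega), if_neg (by omega), zero_mul]

lemma TmulM (n : ℕ) (hn : 1 ≤ n) : T (n+1) * Mmat n = 1 := by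
  ext i j
  rw [Matrix.mul_apply]
  calc ∑ k : Fin (n+1), T (n+1) i k * Mmat n k j
      = ∑ k : Fin (n+1), tN i.1 k.1 * mN n k.1 j.1 := by
        refine Finset.sum_congr rfl fun k _ => ?_
        rw [T_apply]; rfl
    _ = ∑ k ∈ Finset.range (n+1), tN i.1 k * mN n k j.1 :=
        Fin.sum_univ_eq_sum_range (fun k => tN i.1 k * mN n k j.1) (n+1)
    _ = if i.1 = j.1 then 1 else 0 :=
        key_s9 n i.1 j.1 hn (Nat.lt_succ_iff.mp i.2) (Nat.lt_succ_iff.mp j.2)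
    _ = (1 : Matrix (Fin (n+1)) (Fin (n+1)) ℝ) i j := by
        rw [Matrix.one_apply]
        simp [Fin.ext_iff]

lemma Sinv (n : ℕ) (hn : 1 ≤ n) : (S n)⁻¹ = (h n)^2 • Mmat n := by
  apply Matrix.inv_eq_right_inv
  have hh : (h n)^2 ≠ 0 := by unfold h; positivity
  rw [S, Matrix.smul_mul, Matrix.mul_smul, TmulM n hn, smul_smul, inv_mul_cancel₀ hh, one_smul]


set_option maxHeartbeats 2000000 in
lemma main (m : ℕ) (ϑ : ℝ) (hϑ0 : 0 < ϑ) (hϑ1 : ϑ < 1) :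
    normInf (R (m+1) ϑ) = ∑ c : Fin (m+1+1), |R (m+1) ϑ 0 c| ∧
    normInf (R (m+1) ϑ) = (1/2) * (h (m+1) * (2 - ϑ) * (1 - h (m+1))
        - 2 * (h (m+1))^2 * (h (m+1) * (ϑ - 1) + 1) + 2 * (h (m+1) + 1))
        / ((h (m+1) + 1) * (h (m+1) * (ϑ - 1) + 1)) := by
  have hm1 : (1:ℕ) ≤ m + 1 := by omega
  have hX0 : (0:ℝ) ≤ (m:ℝ) := Nat.cast_nonneg m
  have hhdef : h (m+1) = 1/((m:ℝ)+2) := by unfold h; push_cast; ring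
  have hhpos : 0 < h (m+1) := by rw [hhdef]; positivity
  have hhle : h (m+1) ≤ 1/2 := by
    rw [hhdef, div_le_div_iff₀ (by positivity) (by norm_num)]
    linarith
  have e1h : h (m+1) * ((m:ℝ) + 2) = 1 := by rw [hhdef]; field_simp
  -- the vector u = S⁻¹ e₁
  have hu : ∀ i : Fin (m+2), ((S (m+1))⁻¹ *ᵥ e1 (m+1)) i
      = (h (m+1))^2 * (((m:ℝ)+2-(i.1:ℝ))/((m:ℝ)+3)) := by
    intro i
    rw [Sinv (m+1) hm1, Matrix.smul_mulVec]
    simp only [Pi.smul_apply, smul_eq_mul]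
    congr 1
    simp only [Matrix.mulVec, dotProduct]
    rw [Finset.sum_eq_single (0 : Fin (m+2))]
    · have : Mmat (m+1) i 0 = mN (m+1) i.1 0 := rfl
      rw [this, mN_ge (m+1) i.1 0 (Nat.zero_le _)]
      simp [e1]
      push_cast
      ring
    · intro b _ hb
      have hb0 : b.1 ≠ 0 := fun h0 => hb (Fin.ext (by simpa using h0))
      have : e1 (m+1) b = 0 := by simp only [e1]; rw [if_neg hb0]
      rw [this, mul_zero]
    · intro habs
      exact absurd (Finset.mem_univ _) habs
  -- the vector w = vₕ S⁻¹
  have htail : ∀ i : Fin m, vh (m+1) ϑ i.succ.succ = 0 := by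
    intro i
    simp only [vh, Fin.val_succ]
    rw [if_neg (by omega), if_neg (by omega)]
  have hw : ∀ j : Fin (m+2), (vh (m+1) ϑ ᵥ* (S (m+1))⁻¹) j
      = (h (m+1))^2 * ((ϑ*(h (m+1))^2-2) * mN (m+1) 0 j.1
        + ((1-ϑ)*(h (m+1))^2+1) * mN (m+1) 1 j.1) := by
    intro j
    rw [Sinv (m+1) hm1]
    simp only [Matrix.vecMul, dotProduct, Matrix.smul_apply, smul_eq_mul]
    rw [Fin.sum_univ_succ, Fin.sum_univ_succ,
      Finset.sum_eq_zero (fun i (_ : i ∈ Finset.univ) => by rw [htail i, zero_mul])]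
    simp only [vh, Mmat, Matrix.of_apply, Fin.val_zero, Fin.val_succ, Fin.val_zero]
    norm_num
    ring
  -- the scalar c
  have hdot : vh (m+1) ϑ ⬝ᵥ ((S (m+1))⁻¹ *ᵥ e1 (m+1))
      = (ϑ*(h (m+1))^2-2) * ((h (m+1))^2 * (((m:ℝ)+2)/((m:ℝ)+3)))
        + ((1-ϑ)*(h (m+1))^2+1) * ((h (m+1))^2 * (((m:ℝ)+1)/((m:ℝ)+3))) := by
    simp only [dotProduct]
    rw [Fin.sum_univ_succ, Fin.sum_univ_succ,
      Finset.sum_eq_zero (fun i (_ : i ∈ Finset.univ) => by rw [htail i, zero_mul])]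
    rw [hu 0, hu ((0 : Fin (m+1)).succ)]
    simp only [vh, Fin.val_zero, Fin.val_succ, zero_add, reduceIte]
    push_cast
    ring
  have hc : 1 + ((h (m+1))^2)⁻¹ * (vh (m+1) ϑ ⬝ᵥ ((S (m+1))⁻¹ *ᵥ e1 (m+1)))
      = ((m:ℝ)+1+ϑ)/(((m:ℝ)+2)^2*((m:ℝ)+3)) := by
    rw [hdot, hhdef]
    field_simp
    ring
  have hCpos : 0 < ((m:ℝ)+1+ϑ)/(((m:ℝ)+2)^2*((m:ℝ)+3)) := by positivity
  -- entries of R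
  have hRij : ∀ i j : Fin (m+2), R (m+1) ϑ i j
      = (((m:ℝ)+1+ϑ)/(((m:ℝ)+2)^2*((m:ℝ)+3)))⁻¹ *
        ((h (m+1))^2 * (((m:ℝ)+2-(i.1:ℝ))/((m:ℝ)+3)) *
          ((ϑ*(h (m+1))^2-2) * mN (m+1) 0 j.1 + ((1-ϑ)*(h (m+1))^2+1) * mN (m+1) 1 j.1)) := by
    intro i j
    simp only [R, Matrix.smul_apply, Matrix.vecMulVec_apply, smul_eq_mul]
    rw [hc, hu i, hw j]
    have hne : (h (m+1))^2 ≠ 0 := by positivity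
    field_simp
  -- closed forms for the mN entries appearing in the row sums
  have hm00 : mN (m+1) 0 0 = ((m:ℝ)+2)/((m:ℝ)+3) := by
    rw [mN_le _ _ _ le_rfl]; push_cast; ring
  have hm10 : mN (m+1) 1 0 = ((m:ℝ)+1)/((m:ℝ)+3) := by
    rw [mN_ge _ _ _ (by omega)]; push_cast; ring
  -- negativity of the first column entry of the row vector
  have hW0neg : (ϑ*(h (m+1))^2-2) * (((m:ℝ)+2)/((m:ℝ)+3))
      + ((1-ϑ)*(h (m+1))^2+1) * (((m:ℝ)+1)/((m:ℝ)+3)) < 0 := by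
    have hrw : (ϑ*(h (m+1))^2-2) * (((m:ℝ)+2)/((m:ℝ)+3))
        + ((1-ϑ)*(h (m+1))^2+1) * (((m:ℝ)+1)/((m:ℝ)+3))
        = ((ϑ*(h (m+1))^2-2) * ((m:ℝ)+2) + ((1-ϑ)*(h (m+1))^2+1) * ((m:ℝ)+1)) / ((m:ℝ)+3) := by
      ring
    rw [hrw]
    apply div_neg_of_neg_of_pos _ (by positivity)
    have q1 : ϑ*(h (m+1))^2*((m:ℝ)+2) = ϑ*(h (m+1)) := by linear_combination (ϑ*(h (m+1))) * e1h
    have q2 : (h (m+1))^2*((m:ℝ)+1) = h (m+1) - (h (m+1))^2 := by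
      linear_combination (h (m+1)) * e1h
    nlinarith [q1, q2, mul_pos hϑ0 hhpos, sq_nonneg (h (m+1)),
      mul_nonneg (mul_nonneg (sub_nonneg.2 hϑ1.le) hhpos.le) hhpos.le,
      mul_nonneg (sub_nonneg.2 hϑ1.le) (mul_pos hhpos hhpos).le]
  -- entries in columns ≥ 1 of the row vector
  have hgk : ∀ k : Fin (m+1), (ϑ*(h (m+1))^2-2) * mN (m+1) 0 (k.1+1)
      + ((1-ϑ)*(h (m+1))^2+1) * mN (m+1) 1 (k.1+1)
      = (2-ϑ)*(h (m+1))^2 * (((m:ℝ)+1-(k.1:ℝ))/((m:ℝ)+3)) := by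
    intro k
    rw [mN_le _ _ _ (by omega), mN_le _ _ _ (by omega)]
    push_cast
    field_simp
    ring
  have hgknn : ∀ k : Fin (m+1), (0:ℝ) ≤ (2-ϑ)*(h (m+1))^2 * (((m:ℝ)+1-(k.1:ℝ))/((m:ℝ)+3)) := by
    intro k
    have hk : (k.1:ℝ) ≤ (m:ℝ) := by exact_mod_cast Nat.lt_succ_iff.mp k.2
    apply mul_nonneg (mul_nonneg (by linarith) (by positivity))
    apply div_nonneg (by linarith) (by positivity)
  -- Gauss sum
  have hsum : ∑ k : Fin (m+1), (((m:ℝ)+1) - (k.1:ℝ)) = ((m:ℝ)+1)*((m:ℝ)+2)/2 := by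
    rw [Fin.sum_univ_eq_sum_range (fun k => ((m:ℝ)+1) - (k:ℝ)) (m+1)]
    rw [Finset.sum_sub_distrib, Finset.sum_const, Finset.card_range, nsmul_eq_mul]
    have h2 := Finset.sum_range_id_mul_two (m+1)
    have h3 := congrArg (fun t : ℕ => (t:ℝ)) h2
    simp only [Nat.add_sub_cancel] at h3
    push_cast at h3
    push_cast
    linarith
  -- the quantity G = Σ_j |g j|
  have hG : ∑ j : Fin (m+2), |(ϑ*(h (m+1))^2-2) * mN (m+1) 0 j.1
        + ((1-ϑ)*(h (m+1))^2+1) * mN (m+1) 1 j.1|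
      = -((ϑ*(h (m+1))^2-2) * (((m:ℝ)+2)/((m:ℝ)+3))
          + ((1-ϑ)*(h (m+1))^2+1) * (((m:ℝ)+1)/((m:ℝ)+3)))
        + (2-ϑ)*(h (m+1))^2 * (((m:ℝ)+1)*((m:ℝ)+2)/2/((m:ℝ)+3)) := by
    rw [Fin.sum_univ_succ]
    have hfirst : |(ϑ*(h (m+1))^2-2) * mN (m+1) 0 (0:Fin (m+2)).1
        + ((1-ϑ)*(h (m+1))^2+1) * mN (m+1) 1 (0:Fin (m+2)).1|
        = -((ϑ*(h (m+1))^2-2) * (((m:ℝ)+2)/((m:ℝ)+3))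
          + ((1-ϑ)*(h (m+1))^2+1) * (((m:ℝ)+1)/((m:ℝ)+3))) := by
      simp only [Fin.val_zero]
      rw [hm00, hm10, abs_of_neg hW0neg]
    rw [hfirst]
    congr 1
    have hterm : ∀ k : Fin (m+1), |(ϑ*(h (m+1))^2-2) * mN (m+1) 0 (k.succ).1
        + ((1-ϑ)*(h (m+1))^2+1) * mN (m+1) 1 (k.succ).1|
        = (2-ϑ)*(h (m+1))^2 * ((((m:ℝ)+1) - (k.1:ℝ))/((m:ℝ)+3)) := by
      intro k
      rw [Fin.val_succ, hgk k, abs_of_nonneg (hgknn k)]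
    rw [Finset.sum_congr rfl (fun k _ => hterm k)]
    rw [← Finset.mul_sum, ← Finset.sum_div, hsum]
  -- prefactor nonnegativity
  have hGnn : (0:ℝ) ≤ -((ϑ*(h (m+1))^2-2) * (((m:ℝ)+2)/((m:ℝ)+3))
          + ((1-ϑ)*(h (m+1))^2+1) * (((m:ℝ)+1)/((m:ℝ)+3)))
        + (2-ϑ)*(h (m+1))^2 * (((m:ℝ)+1)*((m:ℝ)+2)/2/((m:ℝ)+3)) := by
    have h2 : (0:ℝ) ≤ (2-ϑ)*(h (m+1))^2 * (((m:ℝ)+1)*((m:ℝ)+2)/2/((m:ℝ)+3)) := by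
      apply mul_nonneg (mul_nonneg (by linarith) (by positivity)) (by positivity)
    linarith [hW0neg]
  -- row sums
  have hrow : ∀ i : Fin (m+2), (∑ c, |R (m+1) ϑ i c|)
      = (((m:ℝ)+1+ϑ)/(((m:ℝ)+2)^2*((m:ℝ)+3)))⁻¹ * (h (m+1))^2
        * (((m:ℝ)+2-(i.1:ℝ))/((m:ℝ)+3))
        * (-((ϑ*(h (m+1))^2-2) * (((m:ℝ)+2)/((m:ℝ)+3))
            + ((1-ϑ)*(h (m+1))^2+1) * (((m:ℝ)+1)/((m:ℝ)+3)))
          + (2-ϑ)*(h (m+1))^2 * (((m:ℝ)+1)*((m:ℝ)+2)/2/((m:ℝ)+3))) := by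
    intro i
    have hile : (i.1:ℝ) ≤ (m:ℝ)+1 := by exact_mod_cast Nat.lt_succ_iff.mp i.2
    have hUnn : (0:ℝ) ≤ ((m:ℝ)+2-(i.1:ℝ))/((m:ℝ)+3) :=
      div_nonneg (by linarith) (by positivity)
    have habs : ∀ j : Fin (m+2), |R (m+1) ϑ i j|
        = ((((m:ℝ)+1+ϑ)/(((m:ℝ)+2)^2*((m:ℝ)+3)))⁻¹ * (h (m+1))^2
            * (((m:ℝ)+2-(i.1:ℝ))/((m:ℝ)+3)))
          * |(ϑ*(h (m+1))^2-2) * mN (m+1) 0 j.1 + ((1-ϑ)*(h (m+1))^2+1) * mN (m+1) 1 j.1| := by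
      intro j
      rw [hRij i j, abs_mul, abs_mul]
      rw [abs_of_pos (inv_pos.2 hCpos),
        abs_of_nonneg (mul_nonneg (by positivity : (0:ℝ) ≤ (h (m+1))^2) hUnn)]
      ring
    rw [Finset.sum_congr rfl (fun j _ => habs j), ← Finset.mul_sum, hG]
  -- the sup is attained at the first row
  have h0le : (0:ℝ) ≤ (((m:ℝ)+1+ϑ)/(((m:ℝ)+2)^2*((m:ℝ)+3)))⁻¹ * (h (m+1))^2 := by positivity
  have hi0 : (((0:Fin (m+2)).1:ℝ)) = 0 := by simp
  have hmax : normInf (R (m+1) ϑ) = ∑ c : Fin (m+1+1), |R (m+1) ϑ 0 c| := by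
    unfold normInf
    apply le_antisymm
    · apply Finset.sup'_le
      intro i _
      rw [hrow i, hrow 0, hi0]
      have hmono : ((m:ℝ)+2-(i.1:ℝ))/((m:ℝ)+3) ≤ ((m:ℝ)+2-0)/((m:ℝ)+3) := by
        gcongr <;> positivity
      exact mul_le_mul_of_nonneg_right (mul_le_mul_of_nonneg_left hmono h0le) hGnn
    · exact Finset.le_sup' (fun r => ∑ c, |R (m+1) ϑ r c|) (Finset.mem_univ 0)
  refine ⟨hmax, ?_⟩
  rw [hmax, hrow 0, hi0]
  have hne3 : ((m:ℝ)+1+ϑ) ≠ 0 := by positivity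
  have hden2 : ϑ - 1 + ((m:ℝ)+2) ≠ 0 := by intro hcon; nlinarith
  rw [hhdef]
  field_simp
  ring



/-- for every `n ≥ 1`, `‖R_{n+1}‖_∞` is attained on the first row and equals
`(1/2)(h(2−ϑ)(1−h) − 2h²(h(ϑ−1)+1) + 2(h+1))/((h+1)(h(ϑ−1)+1))`;
in particular `‖R_{n+1}‖_∞ → 1` as `n → ∞`. -/
theorem stmt_9 (ϑ : ℝ) (hϑ : ϑ ∈ Set.Ioo (0:ℝ) 1) :
    (∀ n : ℕ, 1 ≤ n →
      normInf (R n ϑ) = ∑ c : Fin (n+1), |R n ϑ 0 c| ∧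
      normInf (R n ϑ) = (1/2) * (h n * (2 - ϑ) * (1 - h n)
          - 2 * (h n)^2 * (h n * (ϑ - 1) + 1) + 2 * (h n + 1))
          / ((h n + 1) * (h n * (ϑ - 1) + 1))) ∧
    Tendsto (fun n : ℕ => normInf (R n ϑ)) atTop (nhds 1) := by
  obtain ⟨hϑ0, hϑ1⟩ := hϑ
  constructor
  · intro n hn
    obtain ⟨m, rfl⟩ : ∃ m, n = m + 1 := ⟨n - 1, by omega⟩
    exact main m ϑ hϑ0 hϑ1
  · have htend0 : Tendsto (fun n : ℕ => h n) atTop (nhds 0) := by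
      unfold h
      exact tendsto_one_div_add_atTop_nhds_zero_nat
    have hcont : ContinuousAt (fun z : ℝ => (1/2) * (z * (2 - ϑ) * (1 - z)
        - 2 * z^2 * (z * (ϑ - 1) + 1) + 2 * (z + 1))
        / ((z + 1) * (z * (ϑ - 1) + 1))) 0 := by
      apply ContinuousAt.div
      · fun_prop
      · fun_prop
      · norm_num
    have hlim : Tendsto (fun n : ℕ => (1/2) * (h n * (2 - ϑ) * (1 - h n)
        - 2 * (h n)^2 * (h n * (ϑ - 1) + 1) + 2 * (h n + 1))
        / ((h n + 1) * (h n * (ϑ - 1) + 1))) atTop (nhds 1) := by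
      have := (hcont.tendsto).comp htend0
      norm_num at this
      convert this using 2 <;> norm_num
    apply Tendsto.congr' _ hlim
    filter_upwards [eventually_ge_atTop 1] with n hn
    obtain ⟨m, rfl⟩ : ∃ m, n = m + 1 := ⟨n - 1, by omega⟩
    exact ((main m ϑ hϑ0 hϑ1).2).symm
end

section
/- For every n ≥ 1 and ϑ ∈ (0,1), the first row of A_h^{−1} is given by (A_h^{−1})_{1,1} = 1/(h(ϑ−1)+1) > 0, and for every c ∈ {2,…,n+1}, (A_h^{−1})_{1,c} = h²(1+h(1−c))(ϑ−1)/(h(ϑ−1)+1) ≤ 0. -/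
open Matrix Real Filter

/-- explicit inverse of `A` -/
noncomputable def Binv (n : ℕ) (ϑ : ℝ) : Matrix (Fin (n+1)) (Fin (n+1)) ℝ :=
  Matrix.of fun i j =>
    if j.1 = 0 then ((n:ℝ)+1-(i.1:ℝ))/((n:ℝ)+ϑ)
    else if i.1 ≤ j.1 then (h n)^2*(((n:ℝ)+1-(j.1:ℝ))*((i.1:ℝ)-1+ϑ))/((n:ℝ)+ϑ)
    else (h n)^2*(((n:ℝ)+1-(i.1:ℝ))*((j.1:ℝ)-1+ϑ))/((n:ℝ)+ϑ)

lemma h_def (n : ℕ) : h n = 1/((n:ℝ)+1) := rfl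

lemma h_pos (n : ℕ) : 0 < h n := by rw [h_def]; positivity

lemma fin_val_mk {n a : ℕ} (ha : a < n) : ((⟨a, ha⟩ : Fin n)).1 = a := rfl

lemma rowA0 (n : ℕ) (ϑ : ℝ) (i k0 k1 : Fin (n+1)) (hi : i.1 = 0) (h0 : k0.1 = 0)
    (h1 : k1.1 = 1) (k : Fin (n+1)) :
    A n ϑ i k = (if k = k0 then ϑ else 0) + (if k = k1 then 1-ϑ else 0) := by
  have hh := h_ne n
  simp only [A, S, T, trid, vh, e1, Matrix.add_apply, Matrix.smul_apply,
    Matrix.vecMulVec_apply, Matrix.of_apply, smul_eq_mul, Fin.ext_iff, hi, h0, h1, Nat.succ_ne_zero,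
    zero_mul, one_mul, mul_zero, add_zero, zero_add, or_false, false_or]
  split_ifs <;>
    first | (exfalso; first | assumption | omega) | (field_simp <;> ring1) | (field_simp)

lemma rowAi (n : ℕ) (ϑ : ℝ) (m : ℕ) (i km ki kp : Fin (n+1)) (hi : i.1 = m+1)
    (hm : km.1 = m) (hki : ki.1 = m+1) (hkp : kp.1 = m+2) (k : Fin (n+1)) :
    A n ϑ i k = (if k = km then -((h n)^2)⁻¹ else 0)
      + (if k = ki then 2*((h n)^2)⁻¹ else 0)
      + (if k = kp then -((h n)^2)⁻¹ else 0) := by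
  simp only [A, S, T, trid, vh, e1, Matrix.add_apply, Matrix.smul_apply,
    Matrix.vecMulVec_apply, Matrix.of_apply, smul_eq_mul, Fin.ext_iff, hi, hm, hki, hkp,
    Nat.succ_ne_zero, zero_mul, one_mul, mul_zero, add_zero, zero_add, or_false, false_or,
    if_false]
  split_ifs <;> first | (exfalso; first | assumption | omega) | ring

lemma rowAn (n : ℕ) (ϑ : ℝ) (m : ℕ) (i km ki : Fin (n+1)) (hi : i.1 = m+1)
    (hlast : m+1 = n) (hm : km.1 = m) (hki : ki.1 = m+1) (k : Fin (n+1)) :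
    A n ϑ i k = (if k = km then -((h n)^2)⁻¹ else 0)
      + (if k = ki then 2*((h n)^2)⁻¹ else 0) := by
  simp only [A, S, T, trid, vh, e1, Matrix.add_apply, Matrix.smul_apply,
    Matrix.vecMulVec_apply, Matrix.of_apply, smul_eq_mul, Fin.ext_iff, hi, hm, hki,
    Nat.succ_ne_zero, zero_mul, one_mul, mul_zero, add_zero, zero_add, or_false, false_or,
    if_false]
  have hk := k.isLt
  split_ifs <;> first | (exfalso; first | assumption | omega) | ring

set_option maxHeartbeats 3000000 in
lemma AB (n : ℕ) (hn : 1 ≤ n) (ϑ : ℝ) (hϑ0 : 0 < ϑ) : A n ϑ * Binv n ϑ = 1 := by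
  have hne : ((n:ℝ)+ϑ) ≠ 0 := by positivity
  have hn1 : ((n:ℝ)+1) ≠ 0 := by positivity
  have hh := h_ne n
  ext i j
  obtain ⟨iv, hiv⟩ := i
  obtain ⟨jv, hjv⟩ := j
  rw [Matrix.mul_apply, Matrix.one_apply]
  rcases Nat.lt_or_ge iv 1 with hi | hi
  · -- first row
    have hi0 : iv = 0 := by omega
    subst hi0
    simp only [rowA0 n ϑ ⟨0, hiv⟩ ⟨0, hiv⟩ ⟨1, by omega⟩ rfl rfl rfl]
    simp only [add_mul, ite_mul, zero_mul, Finset.sum_add_distrib,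
      Finset.sum_ite_eq', Finset.mem_univ, if_true]
    simp only [Binv, Matrix.of_apply, fin_val_mk, Fin.mk.injEq, h_def, Nat.cast_ofNat,
      Nat.cast_zero, Nat.cast_one]
    split_ifs <;>
      first
        | (exfalso; omega)
        | (push_cast; field_simp <;> ring1)
        | (have hq : jv = 0 := (by omega); subst hq; push_cast; field_simp <;> ring1)
        | (have hq : jv = 1 := (by omega); subst hq; push_cast; field_simp <;> ring1)
  · rcases Nat.lt_or_ge iv n with him | him
    · -- interior row: iv = m+1 with m+2 ≤ n+1
      obtain ⟨m, rfl⟩ : ∃ m, iv = m+1 := ⟨iv-1, by omega⟩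
      simp only [rowAi n ϑ m ⟨m+1, hiv⟩ ⟨m, by omega⟩ ⟨m+1, hiv⟩ ⟨m+2, by omega⟩
        rfl rfl rfl rfl]
      simp only [add_mul, ite_mul, zero_mul, Finset.sum_add_distrib,
        Finset.sum_ite_eq', Finset.mem_univ, if_true]
      simp only [Binv, Matrix.of_apply, fin_val_mk, Fin.mk.injEq, h_def, Nat.cast_ofNat,
        Nat.cast_zero, Nat.cast_one]
      split_ifs
      all_goals try (exfalso; omega)
      all_goals try (push_cast; field_simp <;> ring1)
      all_goals first
        | (have hq : jv = m+1 := (by omega); subst hq; push_cast; field_simp <;> ring1)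
        | (have hq : jv = m := (by omega); subst hq; push_cast; field_simp <;> ring1)
    · -- last row: iv = n
      have hin : iv = n := by omega
      obtain ⟨m, hmn⟩ : ∃ m, n = m+1 := ⟨n-1, by omega⟩
      simp only [rowAn n ϑ m ⟨iv, hiv⟩ ⟨m, by omega⟩ ⟨m+1, by omega⟩
        (show iv = m+1 by omega) hmn.symm rfl rfl]
      simp only [add_mul, ite_mul, zero_mul, Finset.sum_add_distrib,
        Finset.sum_ite_eq', Finset.mem_univ, if_true]
      simp only [Binv, Matrix.of_apply, fin_val_mk, Fin.mk.injEq, h_def, Nat.cast_ofNat,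
        Nat.cast_zero, Nat.cast_one]
      subst hmn
      have hivm : iv = m+1 := by omega
      subst hivm
      split_ifs
      all_goals try (exfalso; omega)
      all_goals try (push_cast; field_simp <;> ring1)
      all_goals first
        | (have hq : jv = m+1 := (by omega); subst hq; push_cast; field_simp <;> ring1)
        | (have hq : jv = m := (by omega); subst hq; push_cast; field_simp <;> ring1)

/-- the first row of `A_h⁻¹`: `(A_h⁻¹)_{1,1} = 1/(h(ϑ−1)+1) > 0` and, for `c ∈ {2,…,n+1}`
(paper index `c = c₀+1`), `(A_h⁻¹)_{1,c} = h²(1+h(1−c))(ϑ−1)/(h(ϑ−1)+1) ≤ 0`. -/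
theorem stmt_10 (n : ℕ) (hn : 1 ≤ n) (ϑ : ℝ) (hϑ : ϑ ∈ Set.Ioo (0:ℝ) 1) :
    ((A n ϑ)⁻¹ 0 0 = 1 / (h n * (ϑ - 1) + 1) ∧ 0 < (A n ϑ)⁻¹ 0 0) ∧
    (∀ c : Fin (n+1), c ≠ 0 →
      (A n ϑ)⁻¹ 0 c = (h n)^2 * (1 + h n * (1 - ((c.1:ℝ) + 1))) * (ϑ - 1)
                        / (h n * (ϑ - 1) + 1) ∧
      (A n ϑ)⁻¹ 0 c ≤ 0) := by
  obtain ⟨hϑ0, hϑ1⟩ := hϑ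
  have hne : ((n:ℝ)+ϑ) ≠ 0 := by positivity
  have hn1 : ((n:ℝ)+1) ≠ 0 := by positivity
  have hinv : (A n ϑ)⁻¹ = Binv n ϑ := Matrix.inv_eq_right_inv (AB n hn ϑ hϑ0)
  have hD : h n * (ϑ-1) + 1 = ((n:ℝ)+ϑ)/((n:ℝ)+1) := by
    rw [h_def]; field_simp; ring
  have hB00 : Binv n ϑ 0 0 = ((n:ℝ)+1)/((n:ℝ)+ϑ) := by
    simp [Binv]
  refine ⟨⟨?_, ?_⟩, ?_⟩
  · rw [hinv, hB00, hD, one_div_div]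
  · rw [hinv, hB00]; positivity
  · intro c hc
    have hcv : c.1 ≠ 0 := fun hcc => hc (Fin.ext hcc)
    have hcn : c.1 ≤ n := by omega
    have hBc : Binv n ϑ 0 c
        = (h n)^2*(((n:ℝ)+1-(c.1:ℝ))*((0:ℝ)-1+ϑ))/((n:ℝ)+ϑ) := by
      simp only [Binv, Matrix.of_apply, Fin.val_zero, Nat.cast_zero]
      rw [if_neg hcv, if_pos (Nat.zero_le _)]
    have heq : (A n ϑ)⁻¹ 0 c = (h n)^2 * (1 + h n * (1 - ((c.1:ℝ) + 1))) * (ϑ - 1)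
        / (h n * (ϑ - 1) + 1) := by
      rw [hinv, hBc, hD, h_def]
      have hcR : (c.1:ℝ) ≤ n := by exact_mod_cast hcn
      field_simp
      ring
    refine ⟨heq, ?_⟩
    rw [heq]
    have hcR : (c.1:ℝ) ≤ n := by exact_mod_cast hcn
    have h1 : 0 ≤ 1 + h n * (1 - ((c.1:ℝ)+1)) := by
      have : 1 + h n * (1 - ((c.1:ℝ)+1)) = ((n:ℝ)+1-(c.1:ℝ))/((n:ℝ)+1) := by
        rw [h_def]; field_simp; ring
      rw [this]
      apply div_nonneg <;> [linarith; positivity]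
    apply div_nonpos_of_nonpos_of_nonneg
    · apply mul_nonpos_of_nonneg_of_nonpos
      · exact mul_nonneg (by positivity) h1
      · linarith
    · rw [hD]; positivity
end

section
/- For every n ≥ 1 and ϑ ∈ (0,1), the induced 1-norm of A_h^{−1} is attained on its first column and equals ‖A_h^{−1}‖₁ = (h+1)/(2h(h(ϑ−1)+1)). -/
open Matrix Real Filter

noncomputable def Kf (n : ℕ) (ϑ : ℝ) (i j : ℕ) : ℝ :=
  if j = 0 then ((n:ℝ)+1)^2 * ((n:ℝ)+1-(i:ℝ))
  else if i < j then ((n:ℝ)+1-(j:ℝ)) * ((i:ℝ)-1+ϑ)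
  else ((j:ℝ)-1+ϑ) * ((n:ℝ)+1-(i:ℝ))

noncomputable def Ginv (n : ℕ) (ϑ : ℝ) : Matrix (Fin (n+1)) (Fin (n+1)) ℝ :=
  Matrix.of fun i j => (h n)^2 * ((n:ℝ)+ϑ)⁻¹ * Kf n ϑ i.1 j.1

lemma Kf0 (n : ℕ) (ϑ : ℝ) (i : ℕ) : Kf n ϑ i 0 = ((n:ℝ)+1)^2 * ((n:ℝ)+1-(i:ℝ)) := by
  simp [Kf]

lemma KfL (n : ℕ) (ϑ : ℝ) (i k : ℕ) (hk : k ≠ 0) (hik : i < k) :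
    Kf n ϑ i k = ((n:ℝ)+1-(k:ℝ)) * ((i:ℝ)-1+ϑ) := by
  simp [Kf, hk, hik]

lemma KfR (n : ℕ) (ϑ : ℝ) (i k : ℕ) (hk : k ≠ 0) (hik : ¬ i < k) :
    Kf n ϑ i k = ((k:ℝ)-1+ϑ) * ((n:ℝ)+1-(i:ℝ)) := by
  simp [Kf, hk, hik]

lemma key_s11 (n : ℕ) (ϑ : ℝ) (i k : ℕ) (hi1 : 1 ≤ i) (hk : k ≤ n) :
    2 * Kf n ϑ i k - Kf n ϑ (i-1) k - Kf n ϑ (i+1) k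
      = if i = k then (n:ℝ)+ϑ else 0 := by
  have hci : ((i-1 : ℕ) : ℝ) = (i:ℝ) - 1 := by
    rw [Nat.cast_sub hi1]; norm_num
  rcases Nat.lt_trichotomy i k with hlt | heq | hgt
  · rw [if_neg (by omega)]
    have hk0 : k ≠ 0 := by omega
    rcases Nat.lt_or_ge (i+1) k with h2 | h2
    · rw [KfL _ _ _ _ hk0 hlt, KfL _ _ _ _ hk0 (by omega), KfL _ _ _ _ hk0 h2, hci]
      push_cast; ring
    · have he : i + 1 = k := by omega
      rw [KfL _ _ _ _ hk0 hlt, KfL _ _ _ _ hk0 (by omega), KfR _ _ _ _ hk0 (by omega), hci]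
      have : (k:ℝ) = (i:ℝ) + 1 := by rw [← he]; push_cast; ring
      rw [this]; push_cast; ring
  · subst heq
    rw [if_pos rfl]
    have hk0 : i ≠ 0 := by omega
    rw [KfR _ _ _ _ hk0 (by omega), KfL _ _ _ _ hk0 (by omega), KfR _ _ _ _ hk0 (by omega), hci]
    push_cast; ring
  · rcases Nat.eq_zero_or_pos k with hk0 | hk0
    · subst hk0
      rw [if_neg (by omega), Kf0, Kf0, Kf0, hci]
      push_cast; ring
    · have hk0' : k ≠ 0 := by omega
      rw [if_neg (by omega), KfR _ _ _ _ hk0' (by omega), KfR _ _ _ _ hk0' (by omega),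
        KfR _ _ _ _ hk0' (by omega), hci]
      push_cast; ring

lemma Kf_top (n : ℕ) (ϑ : ℝ) (k : ℕ) (hk : k ≤ n) : Kf n ϑ (n+1) k = 0 := by
  rcases Nat.eq_zero_or_pos k with h0 | h0
  · subst h0; rw [Kf0]; push_cast; ring
  · rw [KfR _ _ _ _ (by omega) (by omega)]; push_cast; ring

lemma Kf_zr (n : ℕ) (ϑ : ℝ) (k : ℕ) (hk : 1 ≤ k) :
    Kf n ϑ 0 k = ((n:ℝ)+1-(k:ℝ)) * (ϑ-1) := by
  rw [KfL n ϑ 0 k (by omega) hk]; push_cast; ring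

lemma Kf_or (n : ℕ) (ϑ : ℝ) (k : ℕ) (hk : 1 ≤ k) :
    Kf n ϑ 1 k = ((n:ℝ)+1-(k:ℝ)) * ϑ := by
  rcases eq_or_lt_of_le hk with e | l
  · rw [KfR n ϑ 1 k (by omega) (by omega), ← e]; push_cast; ring
  · rw [KfL n ϑ 1 k (by omega) l]; push_cast; ring

lemma A_row0 (n : ℕ) (hn : 1 ≤ n) (ϑ : ℝ) (i j : Fin (n+1)) (hi : i.1 = 0) :
    A n ϑ i j = (if j = (⟨0, Nat.succ_pos n⟩ : Fin (n+1)) then ϑ else 0)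
      + (if j = (⟨1, by omega⟩ : Fin (n+1)) then 1-ϑ else 0) := by
  have hs := hsq_ne n
  simp only [A, S, T, trid, Matrix.add_apply, Matrix.smul_apply, Matrix.of_apply,
    Matrix.vecMulVec_apply, e1, vh, smul_eq_mul, Fin.ext_iff, hi]
  rcases j with ⟨(_|_|jv), hj⟩ <;> simp <;> field_simp <;> rw [div_eq_iff hs] <;> ring

lemma A_mid (n : ℕ) (ϑ : ℝ) (i j : Fin (n+1)) (hi : 1 ≤ i.1) (hin : i.1 < n) :
    A n ϑ i j = ((h n)^2)⁻¹ * ((if j = i then 2 else 0)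
      + (if j = (⟨i.1-1, by omega⟩ : Fin (n+1)) then -1 else 0)
      + (if j = (⟨i.1+1, by omega⟩ : Fin (n+1)) then -1 else 0)) := by
  simp only [A, S, T, trid, Matrix.add_apply, Matrix.smul_apply, Matrix.of_apply,
    Matrix.vecMulVec_apply, e1, vh, smul_eq_mul, Fin.ext_iff]
  split_ifs <;> first | ring1 | (exfalso; omega)

lemma A_last (n : ℕ) (ϑ : ℝ) (i j : Fin (n+1)) (hi : 1 ≤ i.1) (hin : i.1 = n) :
    A n ϑ i j = ((h n)^2)⁻¹ * ((if j = i then 2 else 0)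
      + (if j = (⟨i.1-1, by omega⟩ : Fin (n+1)) then -1 else 0)) := by
  simp only [A, S, T, trid, Matrix.add_apply, Matrix.smul_apply, Matrix.of_apply,
    Matrix.vecMulVec_apply, e1, vh, smul_eq_mul, Fin.ext_iff]
  have hj := j.2
  split_ifs <;> first | ring1 | (exfalso; omega)

lemma A_mul_G (n : ℕ) (hn : 1 ≤ n) (ϑ : ℝ) (hϑ : 0 < ϑ) : A n ϑ * Ginv n ϑ = 1 := by
  have hnϑ : (n:ℝ) + ϑ ≠ 0 := by positivity
  have hs := hsq_ne n
  ext i k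
  rw [Matrix.mul_apply, Matrix.one_apply]
  have hkn : k.1 ≤ n := by omega
  by_cases hi : i.1 = 0
  · -- first row
    have hsum : ∑ j, A n ϑ i j * Ginv n ϑ j k
        = ϑ * Ginv n ϑ ⟨0, Nat.succ_pos n⟩ k + (1-ϑ) * Ginv n ϑ ⟨1, by omega⟩ k := by
      rw [Finset.sum_congr rfl (fun j _ => by rw [A_row0 n hn ϑ i j hi, add_mul])]
      rw [Finset.sum_add_distrib]
      simp [ite_mul, Finset.sum_ite_eq']
      rw [Finset.sum_eq_single (0 : Fin (n+1)) (fun b _ hb => by simp [hb]) (by simp)]; simp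
    rw [hsum]
    have e0 : Ginv n ϑ ⟨0, Nat.succ_pos n⟩ k = (h n)^2 * ((n:ℝ)+ϑ)⁻¹ * Kf n ϑ 0 k.1 := rfl
    have e1' : Ginv n ϑ ⟨1, by omega⟩ k = (h n)^2 * ((n:ℝ)+ϑ)⁻¹ * Kf n ϑ 1 k.1 := rfl
    rw [e0, e1']
    rcases Nat.eq_zero_or_pos k.1 with hk | hk
    · rw [if_pos (Fin.ext (by omega))]
      rw [hk, Kf0, Kf0]
      unfold h
      have hne : (n:ℝ) + 1 ≠ 0 := by positivity
      field_simp
      ring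
    · rw [if_neg (by intro e; rw [e] at hi; omega)]
      rw [Kf_zr n ϑ k.1 hk, Kf_or n ϑ k.1 hk]
      ring
  · -- other rows
    have hi1 : 1 ≤ i.1 := by omega
    have hkey := key_s11 n ϑ i.1 k.1 hi1 hkn
    have hfin : ((h n)^2)⁻¹ * (h n)^2 * (((n:ℝ)+ϑ)⁻¹
          * (2 * Kf n ϑ i.1 k.1 - Kf n ϑ (i.1-1) k.1 - Kf n ϑ (i.1+1) k.1))
        = if i = k then 1 else 0 := by
      rw [hkey, inv_mul_cancel₀ hs, one_mul]
      by_cases hik : i = k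
      · rw [if_pos (by rw [hik]), if_pos hik, inv_mul_cancel₀ hnϑ]
      · rw [if_neg (fun e => hik (Fin.ext e)), if_neg hik, mul_zero]
    by_cases hin : i.1 < n
    · set im : Fin (n+1) := ⟨i.1-1, by omega⟩ with him_def
      set ip : Fin (n+1) := ⟨i.1+1, by omega⟩ with hip_def
      have hpt : ∀ j ∈ Finset.univ, A n ϑ i j * Ginv n ϑ j k
          = ((h n)^2)⁻¹ * ((if j = i then 2 * Ginv n ϑ j k else 0)
            + ((if j = im then -Ginv n ϑ j k else 0)
              + (if j = ip then -Ginv n ϑ j k else 0))) := by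
        intro j _
        rw [A_mid n ϑ i j hi1 hin]
        have h1 : (⟨i.1-1, by omega⟩ : Fin (n+1)) = im := rfl
        have h2 : (⟨i.1+1, by omega⟩ : Fin (n+1)) = ip := rfl
        rw [h1, h2]
        split_ifs <;> ring
      rw [Finset.sum_congr rfl hpt, ← Finset.mul_sum, Finset.sum_add_distrib,
        Finset.sum_add_distrib]
      simp only [Finset.sum_ite_eq', Finset.mem_univ, if_true]
      have e2 : Ginv n ϑ i k = (h n)^2 * ((n:ℝ)+ϑ)⁻¹ * Kf n ϑ i.1 k.1 := rfl
      have e3 : Ginv n ϑ im k = (h n)^2 * ((n:ℝ)+ϑ)⁻¹ * Kf n ϑ (i.1-1) k.1 := rfl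
      have e4 : Ginv n ϑ ip k = (h n)^2 * ((n:ℝ)+ϑ)⁻¹ * Kf n ϑ (i.1+1) k.1 := rfl
      rw [e2, e3, e4, ← hfin]
      ring
    · have hin' : i.1 = n := by omega
      set im : Fin (n+1) := ⟨i.1-1, by omega⟩ with him_def
      have hpt : ∀ j ∈ Finset.univ, A n ϑ i j * Ginv n ϑ j k
          = ((h n)^2)⁻¹ * ((if j = i then 2 * Ginv n ϑ j k else 0)
            + (if j = im then -Ginv n ϑ j k else 0)) := by
        intro j _
        rw [A_last n ϑ i j hi1 hin']
        have h1 : (⟨i.1-1, by omega⟩ : Fin (n+1)) = im := rfl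
        rw [h1]
        split_ifs <;> ring
      rw [Finset.sum_congr rfl hpt, ← Finset.mul_sum, Finset.sum_add_distrib]
      simp only [Finset.sum_ite_eq', Finset.mem_univ, if_true]
      have e2 : Ginv n ϑ i k = (h n)^2 * ((n:ℝ)+ϑ)⁻¹ * Kf n ϑ i.1 k.1 := rfl
      have e3 : Ginv n ϑ im k = (h n)^2 * ((n:ℝ)+ϑ)⁻¹ * Kf n ϑ (i.1-1) k.1 := rfl
      have htop : Kf n ϑ (i.1+1) k.1 = 0 := by rw [hin']; exact Kf_top n ϑ k.1 hkn
      rw [e2, e3, ← hfin, htop]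
      ring

lemma gauss (n : ℕ) : ∑ r : Fin (n+1), ((n:ℝ)+1-(r.1:ℝ)) = ((n:ℝ)+1)*((n:ℝ)+2)/2 := by
  rw [Fin.sum_univ_eq_sum_range (fun i => ((n:ℝ)+1-(i:ℝ))) (n+1)]
  have h2 : (∑ i ∈ Finset.range (n+1), (i:ℝ)) = (n:ℝ)*((n:ℝ)+1)/2 := by
    have h3 := Finset.sum_range_id_mul_two (n+1)
    have h4 : ((∑ i ∈ Finset.range (n+1), i : ℕ):ℝ) * 2 = ((n+1)*n : ℕ) := by
      exact_mod_cast congrArg (Nat.cast : ℕ → ℝ) h3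
    rw [Nat.cast_sum] at h4
    push_cast at h4
    linarith
  rw [Finset.sum_sub_distrib, h2]
  simp only [Finset.sum_const, Finset.card_range, nsmul_eq_mul]
  push_cast
  ring

lemma Kf_bnd (n : ℕ) (ϑ : ℝ) (hϑ0 : 0 < ϑ) (hϑ1 : ϑ < 1) (r c : ℕ)
    (hr : r ≤ n) (hc : c ≤ n) : |Kf n ϑ r c| ≤ Kf n ϑ r 0 := by
  have hrn : (r:ℝ) ≤ (n:ℝ) := by exact_mod_cast hr
  have hcn : (c:ℝ) ≤ (n:ℝ) := by exact_mod_cast hc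
  have hr0 : (0:ℝ) ≤ (r:ℝ) := Nat.cast_nonneg r
  have hc0 : (0:ℝ) ≤ (c:ℝ) := Nat.cast_nonneg c
  have hK0 : Kf n ϑ r 0 = ((n:ℝ)+1)^2 * ((n:ℝ)+1-(r:ℝ)) := Kf0 n ϑ r
  rcases Nat.eq_zero_or_pos c with h0 | h0
  · subst h0
    rw [hK0, abs_of_nonneg (by nlinarith)]
  · have hc1 : (1:ℝ) ≤ (c:ℝ) := by exact_mod_cast h0
    rcases Nat.lt_or_ge r c with hrc | hrc
    · have hrc' : (r:ℝ) + 1 ≤ (c:ℝ) := by exact_mod_cast hrc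
      rw [KfL n ϑ r c (by omega) hrc, hK0, abs_le]
      constructor <;> nlinarith
    · rw [KfR n ϑ r c (by omega) (by omega), hK0,
        abs_of_nonneg (by nlinarith)]
      nlinarith


/-- `‖A_h⁻¹‖₁` is attained on the first column and equals `(h+1)/(2h(h(ϑ−1)+1))`. -/
theorem stmt_11 (n : ℕ) (hn : 1 ≤ n) (ϑ : ℝ) (hϑ : ϑ ∈ Set.Ioo (0:ℝ) 1) :
    norm1 (A n ϑ)⁻¹ = ∑ r : Fin (n+1), |(A n ϑ)⁻¹ r 0| ∧
    norm1 (A n ϑ)⁻¹ = (h n + 1) / (2 * h n * (h n * (ϑ - 1) + 1)) := by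
  obtain ⟨hϑ0, hϑ1⟩ := hϑ
  have hInv : (A n ϑ)⁻¹ = Ginv n ϑ := Matrix.inv_eq_right_inv (A_mul_G n hn ϑ hϑ0)
  rw [hInv]
  have hpos : (0:ℝ) < (n:ℝ)+ϑ := by positivity
  have hz : ((0 : Fin (n+1)) : ℕ) = 0 := rfl
  have hh1 : (h n)^2 * ((n:ℝ)+1)^2 = 1 := by
    unfold h
    have : (n:ℝ)+1 ≠ 0 := by positivity
    field_simp
  have habs0 : ∀ r : Fin (n+1), |Ginv n ϑ r 0| = ((n:ℝ)+ϑ)⁻¹ * ((n:ℝ)+1-(r.1:ℝ)) := by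
    intro r
    have e : Ginv n ϑ r 0 = (h n)^2 * ((n:ℝ)+ϑ)⁻¹ * Kf n ϑ r.1 0 := rfl
    rw [e, Kf0]
    rw [show (h n)^2 * ((n:ℝ)+ϑ)⁻¹ * (((n:ℝ)+1)^2*((n:ℝ)+1-(r.1:ℝ)))
      = ((h n)^2 * ((n:ℝ)+1)^2) * (((n:ℝ)+ϑ)⁻¹*((n:ℝ)+1-(r.1:ℝ))) from by ring, hh1, one_mul]
    have hr : (r.1:ℝ) ≤ (n:ℝ) := by exact_mod_cast (by omega : r.1 ≤ n)
    exact abs_of_nonneg (mul_nonneg (by positivity) (by linarith))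
  have hcol0 : ∑ r : Fin (n+1), |Ginv n ϑ r 0| = ((n:ℝ)+ϑ)⁻¹ * (((n:ℝ)+1)*((n:ℝ)+2)/2) := by
    simp_rw [habs0]
    rw [← Finset.mul_sum, gauss]
  have hbnd : ∀ c : Fin (n+1), ∑ r, |Ginv n ϑ r c| ≤ ∑ r, |Ginv n ϑ r 0| := by
    intro c
    apply Finset.sum_le_sum
    intro r _
    have ec : Ginv n ϑ r c = (h n)^2 * ((n:ℝ)+ϑ)⁻¹ * Kf n ϑ r.1 c.1 := rfl
    have e0 : Ginv n ϑ r 0 = (h n)^2 * ((n:ℝ)+ϑ)⁻¹ * Kf n ϑ r.1 0 := rfl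
    have hnn : (0:ℝ) ≤ (h n)^2 * ((n:ℝ)+ϑ)⁻¹ := by
      apply mul_nonneg (sq_nonneg _) (le_of_lt (inv_pos.2 hpos))
    have hb := Kf_bnd n ϑ hϑ0 hϑ1 r.1 c.1 (by omega) (by omega)
    have hK0nn : 0 ≤ Kf n ϑ r.1 0 := le_trans (abs_nonneg _) hb
    rw [ec, e0, abs_mul, abs_of_nonneg hnn, abs_mul, abs_of_nonneg hnn,
      abs_of_nonneg hK0nn]
    exact mul_le_mul_of_nonneg_left hb hnn
  have hsup : norm1 (Ginv n ϑ) = ∑ r, |Ginv n ϑ r 0| := by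
    unfold norm1
    apply le_antisymm
    · exact Finset.sup'_le _ _ (fun c _ => hbnd c)
    · exact Finset.le_sup' (fun c => ∑ r, |Ginv n ϑ r c|) (Finset.mem_univ 0)
  refine ⟨hsup, ?_⟩
  rw [hsup, hcol0]
  have h1 : (n:ℝ)+1 ≠ 0 := by positivity
  have h2 : (n:ℝ)+ϑ ≠ 0 := ne_of_gt hpos
  have h3 : h n * (ϑ-1) + 1 = ((n:ℝ)+ϑ)/((n:ℝ)+1) := by
    unfold h; field_simp; ring
  rw [h3]
  unfold h
  field_simp
  ring
end

section
/- For every n ≥ 1 and ϑ_S ∈ (0,1), the trace norm of X_n satisfies ‖X_n‖_tr ≤ (n/(2π)) ∫_{−π}^{π} |h²ϑ_S − 4 + 2cos θ| dθ + n(h²(1−ϑ_S)+1), and consequently ‖X_n‖_tr/(n(n+1)) → 0 as n → ∞. -/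
open Matrix Real Filter Kronecker

/-- the `n(n+1)×n(n+1)` matrix `X_n`: all rows zero except the first `n` (block row `0`),
which equal `[T_n(h²ϑ_S−4+2cosθ) | (h²(1−ϑ_S)+1)I_n | 0]`; rows and columns are indexed
lexicographically by pairs `(block index, inner index) : Fin (n+1) × Fin n`. -/
noncomputable def X (n : ℕ) (ϑ : ℝ) :
    Matrix (Fin (n+1) × Fin n) (Fin (n+1) × Fin n) ℝ :=
  Matrix.of fun p q =>
    if p.1.1 = 0 then
      (if q.1.1 = 0 then trid n ((h n)^2 * ϑ - 4) 1 p.2 q.2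
       else if q.1.1 = 1 then ((h n)^2 * (1-ϑ) + 1) * (if p.2 = q.2 then 1 else 0)
       else 0)
    else 0

/-- singular values (counted with multiplicity): the nonnegative square roots of the
eigenvalues of `MᴴM = MᵀM` (the matrix is real, so `Mᴴ = Mᵀ`). -/
noncomputable def sv {m : Type*} [Fintype m] [DecidableEq m] (M : Matrix m m ℝ) : m → ℝ :=
  fun i => Real.sqrt ((Matrix.isHermitian_conjTranspose_mul_self M).eigenvalues i)

/-- the trace norm: the sum of the singular values -/
noncomputable def trNorm {m : Type*} [Fintype m] [DecidableEq m] (M : Matrix m m ℝ) : ℝ :=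
  ∑ i, sv M i

/- ## Auxiliary lemmas -/

lemma trace_eq_sum_eigs {m : Type*} [Fintype m] [DecidableEq m] {A : Matrix m m ℝ}
    (hA : A.IsHermitian) : A.trace = ∑ i, hA.eigenvalues i := by
  rw [hA.trace_eq_sum_eigenvalues]
  simp

lemma ind_sum_le (n : ℕ) (k : ℕ) : ∑ j : Fin n, (if (j:ℕ) = k then (1:ℝ) else 0) ≤ 1 := by
  by_cases hk : k < n
  · have : ∀ j : Fin n, ((j:ℕ) = k) = (j = (⟨k, hk⟩ : Fin n)) := by
      intro j; simp [Fin.ext_iff]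
    simp only [this]
    rw [Finset.sum_ite_eq' Finset.univ]
    simp
  · have : ∀ j : Fin n, ((j:ℕ) = k) = False := by
      intro j; simp; omega
    simp only [this]; simp

lemma ind_sum_le' (n : ℕ) (k : ℕ) : ∑ j : Fin n, (if (j:ℕ)+1 = k then (1:ℝ) else 0) ≤ 1 := by
  have : ∀ j : Fin n, ((j:ℕ)+1 = k) = ((j:ℕ) = k-1 ∧ k ≠ 0) := by
    intro j; simp only [eq_iff_iff]; omega
  simp only [this]
  by_cases hk : k = 0
  · simp [hk]
  · simp only [hk, ne_eq, not_false_iff, and_true]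
    exact ind_sum_le n (k-1)

lemma trid_row_sq (n : ℕ) (a : ℝ) (i : Fin n) :
    ∑ j, (trid n a 1 i j)^2 ≤ a^2 + 2 := by
  have hb : ∀ j : Fin n, (trid n a 1 i j)^2 ≤
      (if j = i then a^2 else 0) + ((if (j:ℕ) = (i:ℕ)+1 then 1 else 0) + (if (j:ℕ)+1 = (i:ℕ) then 1 else 0)) := by
    intro j
    simp only [trid, Matrix.of_apply]
    simp only [Fin.ext_iff]
    split_ifs <;>
      first
        | positivity
        | (exfalso; omega)
        | nlinarith [sq_nonneg a]
  calc ∑ j, (trid n a 1 i j)^2 ≤ ∑ j : Fin n,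
      ((if j = i then a^2 else 0) + ((if (j:ℕ) = (i:ℕ)+1 then 1 else 0) + (if (j:ℕ)+1 = (i:ℕ) then 1 else 0))) :=
        Finset.sum_le_sum fun j _ => hb j
    _ ≤ a^2 + (1 + 1) := by
        rw [Finset.sum_add_distrib, Finset.sum_add_distrib, Finset.sum_ite_eq' Finset.univ]
        simp only [Finset.mem_univ, if_true]
        gcongr
        · exact ind_sum_le n ((i:ℕ)+1)
        · exact ind_sum_le' n (i:ℕ)
    _ = a^2 + 2 := by ring

/-- row sum of squares bound for `X` -/
lemma X_row_sq (n : ℕ) (hn : 1 ≤ n) (ϑ : ℝ) (i : Fin (n+1) × Fin n) :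
    ∑ j, (X n ϑ i j)^2 ≤ (if i.1 = (0 : Fin (n+1)) then ((h n)^2*ϑ-4)^2 + ((h n)^2*(1-ϑ)+1)^2 + 2 else 0) := by
  set a := (h n)^2*ϑ-4
  set b := (h n)^2*(1-ϑ)+1
  by_cases hi : i.1 = (0 : Fin (n+1))
  · simp only [hi, if_true]
    have hX : ∀ j : Fin (n+1) × Fin n, X n ϑ i j =
        (if j.1.1 = 0 then trid n a 1 i.2 j.2
          else if j.1.1 = 1 then b * (if i.2 = j.2 then 1 else 0) else 0) := by
      intro j; simp [X, hi]; rfl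
    simp only [hX]
    rw [Fintype.sum_prod_type]
    have key : ∀ j1 : Fin (n+1),
        (∑ j2 : Fin n, (if j1.1 = 0 then trid n a 1 i.2 j2
          else if j1.1 = 1 then b * (if i.2 = j2 then 1 else 0) else 0)^2)
        ≤ (if j1 = (0 : Fin (n+1)) then a^2+2 else 0)
          + (if j1 = (1 : Fin (n+1)) then b^2 else 0) := by
      intro j1
      rcases Nat.lt_or_ge j1.1 1 with h1 | h1
      · have hj1 : j1 = (0 : Fin (n+1)) := by
          apply Fin.ext; simpa using Nat.lt_one_iff.mp h1
        have hone : ((1 : Fin (n+1)) : ℕ) = 1 := by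
          rw [Fin.val_one']; exact Nat.mod_eq_of_lt (by omega)
        have hne : j1 ≠ (1 : Fin (n+1)) := by
          intro hc; rw [hc, hone] at h1; omega
        simp only [hj1, if_true, if_neg (hj1 ▸ hne)]
        have : (0 : Fin (n+1)).1 = 0 := rfl
        simp only [this, if_true, add_zero]
        exact trid_row_sq n a i.2
      · rcases Nat.lt_or_ge j1.1 2 with h2 | h2
        · have hj1v : j1.1 = 1 := by omega
          have hone : ((1 : Fin (n+1)) : ℕ) = 1 := by
            rw [Fin.val_one']; exact Nat.mod_eq_of_lt (by omega)
          have hj1 : j1 = (1 : Fin (n+1)) := by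
            apply Fin.ext; rw [hj1v, hone]
          have hne : j1 ≠ (0 : Fin (n+1)) := by
            intro hc; rw [hc] at hj1v; simp at hj1v
          rw [hj1] at hne ⊢
          simp only [hone, if_neg hne, if_pos rfl, if_neg (Nat.one_ne_zero), zero_add]
          refine le_of_eq ?_
          have : ∀ j2 : Fin n, (b * (if i.2 = j2 then (1:ℝ) else 0))^2
              = (if j2 = i.2 then b^2 else 0) := by
            intro j2
            rcases eq_or_ne i.2 j2 with hj | hj
            · rw [if_pos hj, if_pos hj.symm]; ring
            · rw [if_neg hj, if_neg (Ne.symm hj)]; ring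
          calc ∑ j2 : Fin n, (b * (if i.2 = j2 then (1:ℝ) else 0))^2
              = ∑ j2 : Fin n, (if j2 = i.2 then b^2 else 0) :=
                Finset.sum_congr rfl fun j2 _ => this j2
            _ = b^2 := by rw [Finset.sum_ite_eq' Finset.univ]; simp
        · have hne0 : j1 ≠ (0 : Fin (n+1)) := by
            intro hc; rw [hc] at h2; simp at h2
          have hone : ((1 : Fin (n+1)) : ℕ) = 1 := by
            rw [Fin.val_one']; exact Nat.mod_eq_of_lt (by omega)
          have hne1 : j1 ≠ (1 : Fin (n+1)) := by
            intro hc; rw [hc, hone] at h2; omega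
          simp only [if_neg (by omega : ¬ j1.1 = 0), if_neg (by omega : ¬ j1.1 = 1),
            if_neg hne0, if_neg hne1]
          simp
    calc _ ≤ ∑ j1 : Fin (n+1), ((if j1 = (0 : Fin (n+1)) then a^2+2 else 0)
          + (if j1 = (1 : Fin (n+1)) then b^2 else 0)) := Finset.sum_le_sum fun j1 _ => key j1
      _ = (a^2+2) + b^2 := by
          rw [Finset.sum_add_distrib, Finset.sum_ite_eq' Finset.univ, Finset.sum_ite_eq' Finset.univ]
          simp
      _ = a^2 + b^2 + 2 := by ring
  · have : ∀ j, X n ϑ i j = 0 := by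
      intro j
      have : i.1.1 ≠ 0 := fun hc => hi (Fin.ext hc)
      simp [X, this, hi]
    simp [this, hi]

lemma X_rank_le (n : ℕ) (ϑ : ℝ) : (X n ϑ).rank ≤ n := by
  classical
  set P : Matrix (Fin (n+1) × Fin n) (Fin n) ℝ :=
    Matrix.of (fun p j => if p.1.1 = 0 ∧ p.2 = j then 1 else 0) with hP
  set Q : Matrix (Fin n) (Fin (n+1) × Fin n) ℝ :=
    Matrix.of (fun j q => X n ϑ ((0 : Fin (n+1)), j) q) with hQ
  have hfac : X n ϑ = P * Q := by
    ext p q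
    simp only [Matrix.mul_apply, hP, hQ, Matrix.of_apply]
    by_cases hp : p.1.1 = 0
    · have : ∀ j : Fin n, ((if p.1.1 = 0 ∧ p.2 = j then (1:ℝ) else 0) * X n ϑ (0, j) q)
          = if j = p.2 then X n ϑ (0, j) q else 0 := by
        intro j
        rcases eq_or_ne p.2 j with hj | hj
        · rw [if_pos ⟨hp, hj⟩, if_pos hj.symm, one_mul]
        · rw [if_neg (fun hc => hj hc.2), if_neg (Ne.symm hj)]; ring
      rw [Finset.sum_congr rfl fun j _ => this j, Finset.sum_ite_eq' Finset.univ]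
      simp only [Finset.mem_univ, if_true]
      simp [X, hp, (Fin.ext hp : p.1 = 0)]
    · have : ∀ j : Fin n, ((if p.1.1 = 0 ∧ p.2 = j then (1:ℝ) else 0) * X n ϑ (0, j) q) = 0 := by
        intro j; rw [if_neg (fun hc => hp hc.1)]; ring
      rw [Finset.sum_congr rfl fun j _ => this j]
      simp [X, hp, show ¬ p.1 = 0 from fun hc => hp (congrArg Fin.val hc)]
  calc (X n ϑ).rank = (P * Q).rank := by rw [hfac]
    _ ≤ Q.rank := Matrix.rank_mul_le_right P Q
    _ ≤ Fintype.card (Fin n) := Q.rank_le_card_height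
    _ = n := Fintype.card_fin n

/-- general Schatten-type bound: `trNorm M ^ 2 ≤ N * trace(MᴴM)` when `rank M ≤ N`. -/
lemma trNorm_sq_le {m : Type*} [Fintype m] [DecidableEq m] (M : Matrix m m ℝ)
    (N : ℕ) (hrank : M.rank ≤ N) :
    (trNorm M)^2 ≤ (N : ℝ) * (Mᴴ * M).trace := by
  classical
  set hA := Matrix.isHermitian_conjTranspose_mul_self M with hhA
  set f := hA.eigenvalues with hf
  have hf0 : ∀ i, 0 ≤ f i := fun i => Matrix.eigenvalues_conjTranspose_mul_self_nonneg M i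
  set S : Finset m := Finset.univ.filter (fun i => f i ≠ 0) with hS
  have hsum : trNorm M = ∑ i ∈ S, Real.sqrt (f i) := by
    rw [trNorm, hS]
    refine (Finset.sum_subset (Finset.filter_subset _ _) fun i _ hi => ?_).symm
    have hz : f i = 0 := by
      by_contra hzz
      exact hi (Finset.mem_filter.mpr ⟨Finset.mem_univ i, hzz⟩)
    show Real.sqrt (f i) = 0
    rw [hz, Real.sqrt_zero]
  have hcard : (S.card : ℝ) ≤ N := by
    have h1 : Fintype.card {i // f i ≠ 0} ≤ N := by
      rw [← Matrix.IsHermitian.rank_eq_card_non_zero_eigs hA]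
      rw [Matrix.rank_conjTranspose_mul_self M]
      exact hrank
    have h2 : Fintype.card {i // f i ≠ 0} = S.card := Fintype.card_subtype _
    exact_mod_cast h2 ▸ h1
  have hcs : (∑ i ∈ S, Real.sqrt (f i))^2 ≤ (S.card : ℝ) * ∑ i ∈ S, (Real.sqrt (f i))^2 := by
    exact_mod_cast sq_sum_le_card_mul_sum_sq (s := S) (f := fun i => Real.sqrt (f i))
  have hsq : ∑ i ∈ S, (Real.sqrt (f i))^2 = ∑ i ∈ S, f i :=
    Finset.sum_congr rfl fun i _ => Real.sq_sqrt (hf0 i)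
  have hsub : ∑ i ∈ S, f i ≤ ∑ i, f i :=
    Finset.sum_le_sum_of_subset_of_nonneg (Finset.filter_subset _ _) (fun i _ _ => hf0 i)
  have htr : ∑ i, f i = (Mᴴ * M).trace := (trace_eq_sum_eigs hA).symm
  calc (trNorm M)^2 = (∑ i ∈ S, Real.sqrt (f i))^2 := by rw [hsum]
    _ ≤ (S.card : ℝ) * ∑ i ∈ S, (Real.sqrt (f i))^2 := hcs
    _ = (S.card : ℝ) * ∑ i ∈ S, f i := by rw [hsq]
    _ ≤ (N : ℝ) * (Mᴴ * M).trace := by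
        apply mul_le_mul hcard (htr ▸ hsub) (Finset.sum_nonneg fun i _ => hf0 i) (Nat.cast_nonneg N)

lemma trace_herm_eq {m : Type*} [Fintype m] [DecidableEq m] (M : Matrix m m ℝ) :
    (Mᴴ * M).trace = ∑ i, ∑ j, (M i j)^2 := by
  rw [Matrix.trace]
  simp only [Matrix.diag, Matrix.mul_apply, Matrix.conjTranspose_apply, star_trivial, ← sq]
  exact Finset.sum_comm

lemma trNorm_nonneg {m : Type*} [Fintype m] [DecidableEq m] (M : Matrix m m ℝ) :
    0 ≤ trNorm M := Finset.sum_nonneg fun i _ => Real.sqrt_nonneg _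

set_option maxHeartbeats 1000000 in
lemma main_bound (ϑS : ℝ) (hϑ : ϑS ∈ Set.Ioo (0:ℝ) 1) (n : ℕ) (hn : 1 ≤ n) :
    trNorm (X n ϑS) ≤ (n : ℝ) * (4 - (h n)^2*ϑS) + (n : ℝ) * ((h n)^2*(1-ϑS)+1) := by
  obtain ⟨hϑ0, hϑ1⟩ := hϑ
  set a := (h n)^2*ϑS - 4 with ha
  set b := (h n)^2*(1-ϑS)+1 with hb
  have hh0 : 0 < h n := by rw [h]; positivity
  have hh2 : h n ≤ 1/2 := by
    rw [h]; rw [div_le_div_iff₀ (by positivity) (by norm_num)]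
    have : (1:ℝ) ≤ (n:ℝ) := by exact_mod_cast hn
    linarith
  have hh4 : (h n)^2 ≤ 1/4 := by nlinarith
  have hhp : 0 < (h n)^2 := by positivity
  have htr : ((X n ϑS)ᴴ * (X n ϑS)).trace ≤ (n:ℝ) * (a^2 + b^2 + 2) := by
    rw [trace_herm_eq]
    calc ∑ i, ∑ j, (X n ϑS i j)^2
        ≤ ∑ i : Fin (n+1) × Fin n, (if i.1 = (0:Fin (n+1)) then a^2+b^2+2 else 0) :=
          Finset.sum_le_sum fun i _ => X_row_sq n hn ϑS i
      _ = (n:ℝ) * (a^2+b^2+2) := by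
          rw [Fintype.sum_prod_type]
          have : ∀ i1 : Fin (n+1), (∑ _i2 : Fin n, (if i1 = (0:Fin (n+1)) then a^2+b^2+2 else 0))
              = (if i1 = (0:Fin (n+1)) then (n:ℝ)*(a^2+b^2+2) else 0) := by
            intro i1
            by_cases hi1 : i1 = (0:Fin (n+1))
            · simp [hi1, Finset.sum_const]; ring
            · simp [hi1]
          rw [Finset.sum_congr rfl fun i1 _ => this i1, Finset.sum_ite_eq' Finset.univ]
          simp
  have hsq := trNorm_sq_le (X n ϑS) n (X_rank_le n ϑS)
  have hsq2 : (trNorm (X n ϑS))^2 ≤ (n:ℝ)^2 * (a^2 + b^2 + 2) := by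
    calc (trNorm (X n ϑS))^2 ≤ (n:ℝ) * ((X n ϑS)ᴴ * (X n ϑS)).trace := hsq
      _ ≤ (n:ℝ) * ((n:ℝ) * (a^2+b^2+2)) := by
          apply mul_le_mul_of_nonneg_left htr (Nat.cast_nonneg n)
      _ = (n:ℝ)^2 * (a^2+b^2+2) := by ring
  have ht0 := trNorm_nonneg (X n ϑS)
  have hna : (4 - (h n)^2*ϑS) = -a := by rw [ha]; ring
  have han : 3 ≤ -a := by rw [ha]; nlinarith
  have hbn : 1 ≤ b := by rw [hb]; nlinarith
  have hn1 : (1:ℝ) ≤ (n:ℝ) := by exact_mod_cast hn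
  rw [hna]
  have hab : (3:ℝ)*1 ≤ (-a)*b := mul_le_mul han hbn (by norm_num) (by linarith)
  have hR0 : 0 ≤ (n:ℝ)*(-a) + (n:ℝ)*b := by nlinarith
  by_contra hc
  push_neg at hc
  have h1 : ((n:ℝ)*(-a) + (n:ℝ)*b)^2 < (trNorm (X n ϑS))^2 := by nlinarith
  nlinarith [h1, hsq2, hab, hn1]

lemma integral_abs (c : ℝ) (hc : c ≤ -2) :
    (∫ θ in (-π)..π, |c + 2 * Real.cos θ|) = 2*π*(-c) := by
  have habs : Set.EqOn (fun θ => |c + 2 * Real.cos θ|) (fun θ => -c - 2 * Real.cos θ)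
      (Set.uIcc (-π) π) := by
    intro θ _
    simp only
    rw [abs_of_nonpos (by nlinarith [Real.cos_le_one θ])]
    ring
  rw [intervalIntegral.integral_congr habs]
  have hi1 : IntervalIntegrable (fun _ : ℝ => -c) MeasureTheory.volume (-π) π :=
    intervalIntegrable_const
  have hi2 : IntervalIntegrable (fun θ : ℝ => 2 * Real.cos θ) MeasureTheory.volume (-π) π :=
    (continuous_const.mul Real.continuous_cos).intervalIntegrable _ _
  rw [show (fun θ : ℝ => -c - 2 * Real.cos θ) = fun θ : ℝ => (fun _ : ℝ => -c) θ - (fun θ : ℝ => 2 * Real.cos θ) θ from rfl]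
  rw [intervalIntegral.integral_sub hi1 hi2]
  rw [intervalIntegral.integral_const, intervalIntegral.integral_const_mul, integral_cos]
  simp only [Real.sin_pi, Real.sin_neg, neg_zero, sub_zero, smul_eq_mul]
  ring

/-- `‖X_n‖_tr ≤ (n/2π)∫_{−π}^{π}|h²ϑ_S − 4 + 2cosθ| dθ + n(h²(1−ϑ_S)+1)` for every `n ≥ 1`,
and consequently `‖X_n‖_tr/(n(n+1)) → 0` as `n → ∞`. -/
theorem stmt_19 (ϑS : ℝ) (hϑ : ϑS ∈ Set.Ioo (0:ℝ) 1) :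
    (∀ n : ℕ, 1 ≤ n →
      trNorm (X n ϑS)
        ≤ ((n:ℝ) / (2*π)) * (∫ θ in (-π)..π, |(h n)^2 * ϑS - 4 + 2 * Real.cos θ|)
          + (n:ℝ) * ((h n)^2 * (1 - ϑS) + 1)) ∧
    Tendsto
      (fun n : ℕ => trNorm (X n ϑS) / ((n:ℝ) * ((n:ℝ)+1)))
      atTop (nhds 0) := by
  obtain ⟨hϑ0, hϑ1⟩ := hϑ
  have hbd : ∀ n : ℕ, 1 ≤ n →
      trNorm (X n ϑS) ≤ (n : ℝ) * (4 - (h n)^2*ϑS) + (n : ℝ) * ((h n)^2*(1-ϑS)+1) :=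
    fun n hn => main_bound ϑS ⟨hϑ0, hϑ1⟩ n hn
  have hhfacts : ∀ n : ℕ, 1 ≤ n → 0 < h n ∧ h n ≤ 1 := by
    intro n hn
    constructor
    · rw [h]; positivity
    · rw [h, div_le_one (by positivity)]
      have : (0:ℝ) ≤ (n:ℝ) := Nat.cast_nonneg n
      linarith
  constructor
  · intro n hn
    obtain ⟨hh0, hh1⟩ := hhfacts n hn
    have hc : (h n)^2 * ϑS - 4 ≤ -2 := by nlinarith
    have hint : (∫ θ in (-π)..π, |(h n)^2 * ϑS - 4 + 2 * Real.cos θ|)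
        = 2*π*(-((h n)^2 * ϑS - 4)) := integral_abs _ hc
    rw [hint]
    have hpi : (2*π) ≠ 0 := by positivity
    have : ((n:ℝ) / (2*π)) * (2*π*(-((h n)^2 * ϑS - 4))) = (n:ℝ) * (4 - (h n)^2*ϑS) := by
      field_simp
      ring
    rw [this]
    exact hbd n hn
  · apply squeeze_zero' (g := fun n : ℕ => 6 * (1/((n:ℝ)+1)))
    · exact Eventually.of_forall fun n =>
        div_nonneg (trNorm_nonneg _) (by positivity)
    · filter_upwards [eventually_ge_atTop 1] with n hn
      obtain ⟨hh0, hh1⟩ := hhfacts n hn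
      have hn1 : (1:ℝ) ≤ (n:ℝ) := by exact_mod_cast hn
      have hub : trNorm (X n ϑS) ≤ 6 * (n:ℝ) := by
        have := hbd n hn
        have h4 : 4 - (h n)^2*ϑS ≤ 4 := by nlinarith
        have hb2 : (h n)^2*(1-ϑS)+1 ≤ 2 := by nlinarith
        nlinarith
      rw [div_le_iff₀ (by positivity)]
      have : 6 * (1/((n:ℝ)+1)) * ((n:ℝ) * ((n:ℝ)+1)) = 6 * (n:ℝ) := by
        field_simp
      rw [this]
      exact hub
    · have h1 : Tendsto (fun n : ℕ => 1/((n:ℝ)+1)) atTop (nhds 0) :=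
        tendsto_one_div_add_atTop_nhds_zero_nat
      have := h1.const_mul (6:ℝ)
      simpa using this
end
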